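/- arXiv:2407.16605 — 5 statements merged into one kernel-verified Lean document; each statement's English description precedes it below -/
import Mathlib

section
/- (Continuity of the Duhamel map.) Let T > 0, u₀ ∈ X_γ, and let u : (0,T] → X_α be strongly measurable with sup_{0<t≤T} t^{d_γ}‖u(t)‖_{X_α} < ∞. Then for every t ∈ (0,T] each function τ ↦ S_i(t−τ) P_i u(τ) is Bochner integrable on (0,t), and the function t ↦ S_{γα}(t)u₀ + Σ_{i=1}^n ∫_0^t S_i(t−τ) P_i u(τ) dτ is continuous from (0,T] to X_α. -/
/-!
The `i`-th Duhamel integrand is bounded by `C (t - τ)^(-dᵢ) τ^(-dγ)`, a Beta-type kernel that is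
integrable on `(0, t)` because both exponents are below `1`; it is measurable because `u` is a
limit of simple functions and `S i` is strongly continuous. For continuity at `t₀`, cut the
integral at `c < t₀`: on `(0, c)` the singularity `τ = s` stays away from the domain, so dominated
convergence applies, while the piece over `(c, s)` is `O((s - c)^(1 - dᵢ))` uniformly for `s` near
`t₀`. The Duhamel term is therefore a locally uniform limit of functions continuous at `t₀`.
-/

open MeasureTheory Set Filter Topology

theorem norm_le_mul_rpow_neg_of_rpow_mul_norm_le {E : Type*} [SeminormedAddCommGroup E] {x : E}
    {t d K : ℝ} (ht : 0 < t) (h : t ^ d * ‖x‖ ≤ K) : ‖x‖ ≤ K * t ^ (-d) := by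
  rw [Real.rpow_neg ht.le, ← div_eq_mul_inv, le_div_iff₀ (Real.rpow_pos_of_pos ht _), mul_comm]
  exact h

theorem norm_apply_apply_le {𝕜 E G H : Type*} [NontriviallyNormedField 𝕜]
    [SeminormedAddCommGroup E] [NormedSpace 𝕜 E] [SeminormedAddCommGroup G] [NormedSpace 𝕜 G]
    [SeminormedAddCommGroup H] [NormedSpace 𝕜 H] {A : G →L[𝕜] H} {B : E →L[𝕜] G} {x : E}
    {α β : ℝ} (hA : ‖A‖ ≤ α) (hx : ‖x‖ ≤ β) : ‖A (B x)‖ ≤ α * ‖B‖ * β :=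
  calc ‖A (B x)‖ ≤ ‖A‖ * (‖B‖ * ‖x‖) := A.le_opNorm_of_le (B.le_opNorm x)
    _ ≤ α * (‖B‖ * β) := mul_le_mul hA (by gcongr) (by positivity) ((norm_nonneg _).trans hA)
    _ = α * ‖B‖ * β := (mul_assoc _ _ _).symm

theorem aestronglyMeasurable_clm_apply_of_continuousOn
    {α 𝕜 E F : Type*} [TopologicalSpace α] [MeasurableSpace α] [OpensMeasurableSpace α]
    [SecondCountableTopology α] {μ : Measure α} [NontriviallyNormedField 𝕜]
    [NormedAddCommGroup E] [NormedSpace 𝕜 E] [NormedAddCommGroup F] [NormedSpace 𝕜 F]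
    {L : α → E →L[𝕜] F} {s : Set α} (hs : MeasurableSet s)
    (hL : ∀ y, ContinuousOn (fun x => L x y) s) {v : α → E}
    (hv : AEStronglyMeasurable v (μ.restrict s)) :
    AEStronglyMeasurable (fun x => L x (v x)) (μ.restrict s) := by
  obtain ⟨g, hg, hvg⟩ := hv
  have simple : ∀ φ : SimpleFunc α E,
      AEStronglyMeasurable (fun x => L x (φ x)) (μ.restrict s) := by
    intro φ
    induction φ using SimpleFunc.induction with
    | @const c t ht =>
      have : (fun x => L x (SimpleFunc.piecewise t ht (.const α c) (.const α 0) x)) =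
          t.indicator fun x => L x c := by
        ext x
        by_cases hx : x ∈ t <;> simp [hx]
      rw [this]
      exact ((hL c).aestronglyMeasurable hs).indicator ht
    | @add φ ψ _ hφ hψ =>
      exact (hφ.add hψ).congr (ae_of_all _ fun x => by simp)
  have limit : AEStronglyMeasurable (fun x => L x (g x)) (μ.restrict s) :=
    aestronglyMeasurable_of_tendsto_ae atTop (fun k => simple (hg.approx k))
      (ae_of_all _ fun x => ((L x).continuous.tendsto _).comp (hg.tendsto_approx x))
  refine limit.congr ?_
  filter_upwards [hvg] with x hx
  rw [hx]

theorem integrableOn_rpow_sub_mul_rpow {a b t : ℝ} (ha0 : 0 ≤ a) (ha : a < 1) (hb0 : 0 ≤ b)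
    (hb : b < 1) :
    IntegrableOn (fun τ => (t - τ) ^ (-a) * τ ^ (-b)) (Ioo 0 t) := by
  have hleft : IntegrableOn (fun τ : ℝ => τ ^ (-b)) (Ioo 0 t) :=
    (intervalIntegral.intervalIntegrable_rpow' (by linarith)).1.mono_set Ioo_subset_Ioc_self
  have hright : IntegrableOn (fun τ : ℝ => (t - τ) ^ (-a)) (Ioo 0 t) := by
    have := (intervalIntegral.intervalIntegrable_rpow' (a := 0) (b := t)
      (by linarith : (-1 : ℝ) < -a)).comp_sub_left t
    rw [sub_zero, sub_self] at this
    exact this.symm.1.mono_set Ioo_subset_Ioc_self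
  refine Integrable.mono' ((hleft.const_mul ((t / 2) ^ (-a))).add
    (hright.const_mul ((t / 2) ^ (-b)))) (by fun_prop) ?_
  filter_upwards [ae_restrict_mem measurableSet_Ioo] with τ ⟨hτ0, hτt⟩
  have hA : 0 ≤ (t - τ) ^ (-a) := Real.rpow_nonneg (by linarith) _
  have hB : 0 ≤ τ ^ (-b) := Real.rpow_nonneg hτ0.le _
  rw [Real.norm_of_nonneg (mul_nonneg hA hB), Pi.add_apply]
  -- on each half of `(0, t)` one of the two factors is bounded by its value at `t / 2`
  rcases le_total τ (t / 2) with hτ | hτ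
  · have : (t - τ) ^ (-a) ≤ (t / 2) ^ (-a) :=
      Real.rpow_le_rpow_of_nonpos (by linarith) (by linarith) (by linarith)
    nlinarith [Real.rpow_nonneg (by linarith : (0:ℝ) ≤ t / 2) (-b)]
  · have : τ ^ (-b) ≤ (t / 2) ^ (-b) :=
      Real.rpow_le_rpow_of_nonpos (by linarith) hτ (by linarith)
    nlinarith [Real.rpow_nonneg (by linarith : (0:ℝ) ≤ t / 2) (-a)]

section SingularKernel

variable {E : Type*} [NormedAddCommGroup E]

theorem integrableOn_Ioo_of_norm_le_rpow {f : ℝ → E} {a b s C : ℝ} (ha0 : 0 ≤ a) (ha : a < 1)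
    (hb0 : 0 ≤ b) (hb : b < 1) (hf : AEStronglyMeasurable f (volume.restrict (Ioo 0 s)))
    (hf_le : ∀ τ ∈ Ioo 0 s, ‖f τ‖ ≤ C * ((s - τ) ^ (-a) * τ ^ (-b))) :
    IntegrableOn f (Ioo 0 s) :=
  ((integrableOn_rpow_sub_mul_rpow ha0 ha hb0 hb).const_mul C).mono' hf
    ((ae_restrict_iff' measurableSet_Ioo).2 (ae_of_all _ hf_le))

variable [NormedSpace ℝ E]

theorem norm_intervalIntegral_le_of_norm_le_rpow_sub {f : ℝ → E} {a c s D : ℝ} (ha : a < 1)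
    (hcs : c ≤ s) (hf : ∀ τ ∈ Ioo c s, ‖f τ‖ ≤ D * (s - τ) ^ (-a)) :
    ‖∫ τ in c..s, f τ‖ ≤ D * ((s - c) ^ (1 - a) / (1 - a)) := by
  have hint : IntervalIntegrable (fun τ => (s - τ) ^ (-a)) volume c s := by
    simpa using (intervalIntegral.intervalIntegrable_rpow' (a := 0) (b := s - c)
      (by linarith : (-1 : ℝ) < -a)).comp_sub_left s |>.symm
  calc ‖∫ τ in c..s, f τ‖ ≤ ∫ τ in c..s, D * (s - τ) ^ (-a) := by
        refine intervalIntegral.norm_integral_le_of_norm_le hcs ?_ (hint.const_mul D)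
        filter_upwards [Measure.ae_ne volume s] with τ hτs hτ
        exact hf τ ⟨hτ.1, lt_of_le_of_ne hτ.2 hτs⟩
    _ = D * ((s - c) ^ (1 - a) / (1 - a)) := by
        rw [intervalIntegral.integral_const_mul,
          intervalIntegral.integral_comp_sub_left (fun x => x ^ (-a)), sub_self,
          integral_rpow (Or.inl (by linarith)), Real.zero_rpow (by linarith), sub_zero,
          neg_add_eq_sub]

variable {F : ℝ → ℝ → E} {T a b C : ℝ}

theorem continuousWithinAt_intervalIntegral_of_norm_le_rpow (ha0 : 0 ≤ a) (hb : b < 1)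
    (hC : 0 ≤ C)
    (hF_meas : ∀ s ∈ Ioc 0 T, AEStronglyMeasurable (F s) (volume.restrict (Ioo 0 s)))
    (hF_cont : ∀ τ > 0, ContinuousOn (fun s => F s τ) (Ioi τ))
    (hF_le : ∀ s τ, 0 < τ → τ < s → s ≤ T → ‖F s τ‖ ≤ C * ((s - τ) ^ (-a) * τ ^ (-b)))
    {c t₀ : ℝ} (hc : 0 ≤ c) (hct₀ : c < t₀) :
    ContinuousWithinAt (fun s => ∫ τ in 0..c, F s τ) (Ioc 0 T) t₀ := by
  have near : ∀ᶠ s in 𝓝[Ioc 0 T] t₀, s ∈ Ioc 0 T ∩ Ioi ((c + t₀) / 2) :=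
    inter_mem_nhdsWithin _ (Ioi_mem_nhds (by linarith : (c + t₀) / 2 < t₀))
  refine intervalIntegral.continuousWithinAt_of_dominated_interval
    (bound := fun τ => C * (((t₀ - c) / 2) ^ (-a) * τ ^ (-b))) ?_ ?_ ?_ ?_
  · filter_upwards [near] with s ⟨hsT, hs⟩
    refine (hF_meas s hsT).mono_measure (Measure.restrict_mono ?_ le_rfl)
    rw [uIoc_of_le hc]
    exact Ioc_subset_Ioo_right (by simp only [mem_Ioi] at hs; linarith)
  · filter_upwards [near] with s ⟨hsT, hs⟩
    refine ae_of_all _ fun τ hτ => ?_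
    rw [uIoc_of_le hc] at hτ
    simp only [mem_Ioi] at hs
    refine (hF_le s τ hτ.1 (by linarith [hτ.2]) hsT.2).trans (mul_le_mul_of_nonneg_left
      (mul_le_mul_of_nonneg_right ?_ (Real.rpow_nonneg hτ.1.le _)) hC)
    exact Real.rpow_le_rpow_of_nonpos (by linarith) (by linarith [hτ.2]) (by linarith)
  · exact ((intervalIntegral.intervalIntegrable_rpow' (by linarith)).const_mul _).const_mul _
  · refine ae_of_all _ fun τ hτ => ?_
    rw [uIoc_of_le hc] at hτ
    exact ((hF_cont τ hτ.1).continuousAt (Ioi_mem_nhds (by linarith [hτ.2]))).continuousWithinAt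

theorem norm_intervalIntegral_tail_le (ha : a < 1) (hb0 : 0 ≤ b) (hC : 0 ≤ C)
    (hF_le : ∀ s τ, 0 < τ → τ < s → s ≤ T → ‖F s τ‖ ≤ C * ((s - τ) ^ (-a) * τ ^ (-b)))
    {m c s : ℝ} (hm : 0 < m) (hmc : m ≤ c) (hcs : c ≤ s) (hsT : s ≤ T) :
    ‖∫ τ in c..s, F s τ‖ ≤ C * m ^ (-b) * ((s - c) ^ (1 - a) / (1 - a)) := by
  refine norm_intervalIntegral_le_of_norm_le_rpow_sub ha hcs fun τ hτ => ?_
  refine (hF_le s τ (by linarith [hτ.1]) hτ.2 hsT).trans ?_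
  rw [mul_comm ((s - τ) ^ (-a)), ← mul_assoc]
  refine mul_le_mul_of_nonneg_right (mul_le_mul_of_nonneg_left ?_ hC)
    (Real.rpow_nonneg (by linarith [hτ.2]) _)
  exact Real.rpow_le_rpow_of_nonpos hm (by linarith [hτ.1]) (by linarith)

theorem continuousOn_integral_Ioo_of_norm_le_rpow (ha0 : 0 ≤ a) (ha : a < 1) (hb0 : 0 ≤ b)
    (hb : b < 1) (hC : 0 ≤ C)
    (hF_meas : ∀ s ∈ Ioc 0 T, AEStronglyMeasurable (F s) (volume.restrict (Ioo 0 s)))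
    (hF_cont : ∀ τ > 0, ContinuousOn (fun s => F s τ) (Ioi τ))
    (hF_le : ∀ s τ, 0 < τ → τ < s → s ≤ T → ‖F s τ‖ ≤ C * ((s - τ) ^ (-a) * τ ^ (-b))) :
    ContinuousOn (fun s => ∫ τ in Ioo 0 s, F s τ) (Ioc 0 T) := by
  have hF_int : ∀ s ∈ Ioc 0 T, IntervalIntegrable (F s) volume 0 s := fun s hs =>
    (intervalIntegrable_iff_integrableOn_Ioo_of_le hs.1.le).2
      (integrableOn_Ioo_of_norm_le_rpow ha0 ha hb0 hb (hF_meas s hs)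
        fun τ hτ => hF_le s τ hτ.1 hτ.2 hs.2)
  refine ContinuousOn.congr (f := fun s => ∫ τ in 0..s, F s τ) (fun t₀ ht₀ => ?_) fun s hs => by
    dsimp only
    rw [intervalIntegral.integral_of_le hs.1.le, integral_Ioc_eq_integral_Ioo]
  refine continuousWithinAt_of_locally_uniform_approx_of_continuousWithinAt ht₀ fun U hU => ?_
  obtain ⟨ε, hε, hεU⟩ := Metric.mem_uniformity_dist.1 hU
  set D := C * (t₀ / 2) ^ (-b)
  have tail : Tendsto (fun c => D * ((2 * (t₀ - c)) ^ (1 - a) / (1 - a))) (𝓝[<] t₀) (𝓝 0) := by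
    have : ContinuousAt (fun c : ℝ => D * ((2 * (t₀ - c)) ^ (1 - a) / (1 - a))) t₀ := by
      fun_prop (disch := right; linarith)
    simpa [Real.zero_rpow (by linarith : 1 - a ≠ 0)] using
      this.tendsto.mono_left nhdsWithin_le_nhds
  obtain ⟨c, hcε, hc⟩ := ((tail.eventually (gt_mem_nhds hε)).and
    (Ioo_mem_nhdsLT (by linarith [ht₀.1] : t₀ / 2 < t₀))).exists
  refine ⟨Ioc 0 T ∩ Ioo c (2 * t₀ - c),
    inter_mem_nhdsWithin _ (Ioo_mem_nhds hc.2 (by linarith [hc.2])),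
    fun s => ∫ τ in 0..c, F s τ,
    continuousWithinAt_intervalIntegral_of_norm_le_rpow ha0 hb hC hF_meas hF_cont hF_le
      (by linarith [hc.1, ht₀.1]) hc.2, ?_⟩
  rintro s ⟨hsT, hcs, hs⟩
  apply hεU
  have hF_int_c : IntervalIntegrable (F s) volume 0 c := (hF_int s hsT).mono_set <| by
    rw [uIcc_of_le (by linarith [hc.1, ht₀.1]), uIcc_of_le hsT.1.le]
    exact Icc_subset_Icc_right hcs.le
  rw [dist_eq_norm, intervalIntegral.integral_interval_sub_left (hF_int s hsT) hF_int_c]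
  refine lt_of_le_of_lt ?_ hcε
  calc ‖∫ τ in c..s, F s τ‖ ≤ D * ((s - c) ^ (1 - a) / (1 - a)) :=
        norm_intervalIntegral_tail_le ha hb0 hC hF_le (by linarith [ht₀.1]) hc.1.le hcs.le hsT.2
    _ ≤ D * ((2 * (t₀ - c)) ^ (1 - a) / (1 - a)) := by
        have : 0 ≤ D := mul_nonneg hC (Real.rpow_nonneg (by linarith [ht₀.1]) _)
        have : 0 < 1 - a := by linarith
        gcongr
        linarith

end SingularKernel

theorem duhamel_map_continuous_general
    {n : ℕ}
    {Xγ Xα : Type*}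
    [NormedAddCommGroup Xγ] [NormedSpace ℝ Xγ]
    [NormedAddCommGroup Xα] [NormedSpace ℝ Xα]
    {Xβ : Fin n → Type*} [∀ i, NormedAddCommGroup (Xβ i)]
    [∀ i, NormedSpace ℝ (Xβ i)]
    (Sγα : ℝ → Xγ →L[ℝ] Xα)
    (S : (i : Fin n) → ℝ → (Xβ i →L[ℝ] Xα))
    (hScont : ∀ x : Xγ, ContinuousOn (fun t => (Sγα t) x) (Ioi 0))
    (hSicont : ∀ i (y : Xβ i), ContinuousOn (fun t => (S i t) y) (Ioi 0))
    (dγ : ℝ) (hdγ0 : 0 ≤ dγ) (hdγ1 : dγ < 1)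
    (d : Fin n → ℝ) (hd0 : ∀ i, 0 ≤ d i) (hd1 : ∀ i, d i < 1)
    (hbound : ∀ T > (0:ℝ), ∃ M : ℝ,
      (∀ t : ℝ, 0 < t → t ≤ T → ‖Sγα t‖ ≤ M * t ^ (-dγ)) ∧
      (∀ i, ∀ t : ℝ, 0 < t → t ≤ T → ‖S i t‖ ≤ M * t ^ (-(d i))))
    (P : (i : Fin n) → Xα →L[ℝ] Xβ i)
    (T : ℝ) (hT : 0 < T) (u₀ : Xγ) (u : ℝ → Xα)
    (humeas : AEStronglyMeasurable u (volume.restrict (Ioi (0:ℝ))))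
    (hubd : ∃ K : ℝ, ∀ t : ℝ, 0 < t → t ≤ T → t ^ dγ * ‖u t‖ ≤ K) :
    (∀ t : ℝ, 0 < t → t ≤ T → ∀ i,
        IntegrableOn (fun τ => (S i (t - τ)) ((P i) (u τ))) (Ioo 0 t)) ∧
    ContinuousOn
      (fun t => (Sγα t) u₀ + ∑ i, ∫ τ in Ioo (0:ℝ) t, (S i (t - τ)) ((P i) (u τ)))
      (Ioc 0 T) := by
  obtain ⟨M, hMγ, hM⟩ := hbound T hT
  obtain ⟨K, hK⟩ := hubd
  have hM0 : 0 ≤ M := (mul_nonneg_iff_of_pos_right (Real.rpow_pos_of_pos hT _)).1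
    ((norm_nonneg _).trans (hMγ T hT le_rfl))
  have hK0 : 0 ≤ K := (mul_nonneg (Real.rpow_nonneg hT.le _) (norm_nonneg _)).trans (hK T hT le_rfl)
  have hF_meas : ∀ i, ∀ s ∈ Ioc 0 T, AEStronglyMeasurable (fun τ => S i (s - τ) (P i (u τ)))
      (volume.restrict (Ioo 0 s)) := fun i s _ =>
    aestronglyMeasurable_clm_apply_of_continuousOn measurableSet_Ioo
      (fun y => (hSicont i y).comp (continuousOn_const.sub continuousOn_id)
        fun τ hτ => sub_pos.2 hτ.2)
      ((P i).continuous.comp_aestronglyMeasurable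
        (humeas.mono_measure (Measure.restrict_mono Ioo_subset_Ioi_self le_rfl)))
  have hF_cont : ∀ i, ∀ τ > 0, ContinuousOn (fun s => S i (s - τ) (P i (u τ))) (Ioi τ) :=
    fun i τ _ => (hSicont i _).comp (continuousOn_id.sub continuousOn_const)
      fun _ hs => mem_Ioi.2 (sub_pos.2 hs)
  have hF_le : ∀ i s τ, 0 < τ → τ < s → s ≤ T →
      ‖S i (s - τ) (P i (u τ))‖ ≤ M * ‖P i‖ * K * ((s - τ) ^ (-d i) * τ ^ (-dγ)) :=
    fun i s τ hτ hτs hsT => (norm_apply_apply_le (hM i _ (by linarith) (by linarith))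
      (norm_le_mul_rpow_neg_of_rpow_mul_norm_le hτ (hK τ hτ (by linarith)))).trans_eq (by ring)
  have hC : ∀ i, 0 ≤ M * ‖P i‖ * K := fun i => by positivity
  refine ⟨fun t ht htT i => integrableOn_Ioo_of_norm_le_rpow (hd0 i) (hd1 i) hdγ0 hdγ1
    (hF_meas i t ⟨ht, htT⟩) fun τ hτ => hF_le i t τ hτ.1 hτ.2 htT, ?_⟩
  exact ((hScont u₀).mono Ioc_subset_Ioi_self).add <| continuousOn_finsetSum _ fun i _ =>
    continuousOn_integral_Ioo_of_norm_le_rpow (hd0 i) (hd1 i) hdγ0 hdγ1 (hC i) (hF_meas i)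
      (hF_cont i) (hF_le i)

/-- Continuity of the Duhamel map: if `u : (0,T] → X_α` is strongly measurable
with `sup_{0<t≤T} t^{d_γ}‖u(t)‖ < ∞`, then for every `t ∈ (0,T]` the integrand
`τ ↦ S_i(t-τ) P_i u(τ)` is Bochner integrable on `(0,t)` and
`t ↦ S_{γα}(t)u₀ + Σ_i ∫_0^t S_i(t-τ) P_i u(τ) dτ` is continuous on `(0,T]`. -/
theorem duhamel_map_continuous
    {n : ℕ} (hn : 0 < n)
    {Xγ Xα : Type*}
    [NormedAddCommGroup Xγ] [NormedSpace ℝ Xγ] [CompleteSpace Xγ]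
    [NormedAddCommGroup Xα] [NormedSpace ℝ Xα] [CompleteSpace Xα]
    {Xβ : Fin n → Type*} [∀ i, NormedAddCommGroup (Xβ i)]
    [∀ i, NormedSpace ℝ (Xβ i)] [∀ i, CompleteSpace (Xβ i)]
    (Sγα : ℝ → Xγ →L[ℝ] Xα)
    (S : (i : Fin n) → ℝ → (Xβ i →L[ℝ] Xα))
    (hScont : ∀ x : Xγ, ContinuousOn (fun t => (Sγα t) x) (Ioi 0))
    (hSicont : ∀ i (y : Xβ i), ContinuousOn (fun t => (S i t) y) (Ioi 0))
    (dγ : ℝ) (hdγ0 : 0 ≤ dγ) (hdγ1 : dγ < 1)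
    (d : Fin n → ℝ) (hd0 : ∀ i, 0 ≤ d i) (hd1 : ∀ i, d i < 1)
    (hbound : ∀ T > (0:ℝ), ∃ M : ℝ,
      (∀ t : ℝ, 0 < t → t ≤ T → ‖Sγα t‖ ≤ M * t ^ (-dγ)) ∧
      (∀ i, ∀ t : ℝ, 0 < t → t ≤ T → ‖S i t‖ ≤ M * t ^ (-(d i))))
    (P : (i : Fin n) → Xα →L[ℝ] Xβ i)
    (T : ℝ) (hT : 0 < T) (u₀ : Xγ) (u : ℝ → Xα)
    (humeas : AEStronglyMeasurable u (volume.restrict (Ioi (0:ℝ))))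
    (hubd : ∃ K : ℝ, ∀ t : ℝ, 0 < t → t ≤ T → t ^ dγ * ‖u t‖ ≤ K) :
    (∀ t : ℝ, 0 < t → t ≤ T → ∀ i,
        IntegrableOn (fun τ => (S i (t - τ)) ((P i) (u τ))) (Ioo 0 t)) ∧
    ContinuousOn
      (fun t => (Sγα t) u₀ + ∑ i, ∫ τ in Ioo (0:ℝ) t, (S i (t - τ)) ((P i) (u τ)))
      (Ioc 0 T) :=
  duhamel_map_continuous_general Sγα S hScont hSicont dγ hdγ0 hdγ1 d hd0 hd1 hbound P T hT u₀ u
    humeas hubd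
end

section
/- (Iterated perturbations: performing the perturbations sequentially gives the same solution as performing them jointly.) Let u₀ ∈ X_γ. Suppose u : (0,∞) → X_α is strongly measurable with sup_{0<t≤T} t^{d_γ}‖u(t)‖ < ∞ for all T > 0 and satisfies the jointly perturbed equation u(t) = S_{γα}(t)u₀ + ∫_0^t S₁(t−s) P₁ u(s) ds + ∫_0^t S₂(t−s) P₂ u(s) ds for all t > 0, and suppose v : (0,∞) → X_α is strongly measurable with sup_{0<t≤T} t^{d_γ}‖v(t)‖ < ∞ for all T > 0 and satisfies the sequentially perturbed equation v(t) = S¹_{γα}(t)u₀ + ∫_0^t S¹_{2α}(t−s) P₂ v(s) ds for all t > 0. Then u(t) = v(t) for every t > 0. -/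
/-!
Both `u` and `v` solve the single linear Volterra equation
`w t = Sγα t u₀ + ∫₀ᵗ K (t - s) (w s) ds` with the kernel `K = S₁ P₁ + S₂ P₂`. For `v` this
comes from substituting the Duhamel identities of `S¹_{γα}` and `S¹_{2α}` into its equation and
exchanging the order of integration over the triangle `0 < r < s < t`.

Uniqueness for that equation is a singular Gronwall argument: `w = ‖u - v‖` is `O(t^{-dγ})` and
satisfies `w t ≤ C ∫₀ᵗ (t - s)^{-d} w s ds`. Since `∫_τ^t (t - s)^{-d} s^{-e} ds ≤ c ε^{1-d} t^{-e}`
whenever `t - τ ≤ ε`, once `w` vanishes on `(0, τ]` each iteration of the inequality halves the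
weighted bound on `(τ, τ + ε]` for small `ε`, so `w` vanishes window by window.
-/

open MeasureTheory Set Filter Topology Asymptotics

section Kernel

variable {d e s t τ ε : ℝ}

lemma sub_rpow_neg_mul_rpow_neg_le (hd : d ∈ Icc 0 1) (he : e ∈ Icc 0 1) (hs : 0 < s)
    (hst : s < t) (hε : t - s ≤ ε) :
    (t - s) ^ (-d) * s ^ (-e)
      ≤ 2 * t ^ (-e) * (t - s) ^ (-d) + 2 * ε ^ (1 - d) / t * s ^ (-e) := by
  have ht : 0 < t := hs.trans hst
  have hts : 0 < t - s := sub_pos.2 hst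
  have h₁ : 0 ≤ (t - s) ^ (-d) := Real.rpow_nonneg hts.le _
  have h₂ : 0 ≤ s ^ (-e) := Real.rpow_nonneg hs.le _
  rcases le_or_gt (t / 2) s with hs2 | hs2
  · have hse : s ^ (-e) ≤ 2 * t ^ (-e) :=
      calc s ^ (-e) ≤ (t / 2) ^ (-e) :=
            Real.rpow_le_rpow_of_nonpos (by positivity) hs2 (by linarith [he.1])
        _ = 2 ^ e * t ^ (-e) := by
          rw [Real.div_rpow ht.le zero_le_two, Real.rpow_neg zero_le_two]; field_simp
        _ ≤ 2 * t ^ (-e) := by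
          gcongr
          simpa using Real.rpow_le_rpow_of_exponent_le one_le_two he.2
    have : 0 ≤ 2 * ε ^ (1 - d) / t * s ^ (-e) := by
      have : 0 ≤ ε := by linarith
      positivity
    nlinarith
  · have hdε : (t - s) ^ (-d) ≤ 2 * ε ^ (1 - d) / t :=
      calc (t - s) ^ (-d) ≤ (t / 2) ^ (-d) :=
            Real.rpow_le_rpow_of_nonpos (by positivity) (by linarith) (by linarith [hd.1])
        _ = (t / 2) ^ (1 - d) / (t / 2) := by
          rw [Real.rpow_sub (by positivity), Real.rpow_one, Real.rpow_neg (by positivity)]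
          field_simp
        _ ≤ ε ^ (1 - d) / (t / 2) := by
          gcongr
          · linarith [hd.2]
          · linarith
        _ = 2 * ε ^ (1 - d) / t := by field_simp
    have : 0 ≤ 2 * t ^ (-e) * (t - s) ^ (-d) := by positivity
    nlinarith

lemma integrableOn_Ioo_sub_rpow_neg (hd : d < 1) (hτt : τ ≤ t) :
    IntegrableOn (fun s => (t - s) ^ (-d)) (Ioo τ t) := by
  have := (intervalIntegral.intervalIntegrable_rpow' (a := t - τ) (b := t - t)
    (by linarith : -1 < -d)).comp_sub_left t
  simp only [sub_sub_cancel] at this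
  exact (intervalIntegrable_iff_integrableOn_Ioo_of_le hτt).1 this

lemma integral_Ioo_sub_rpow_neg (hd : d < 1) (hτt : τ ≤ t) :
    ∫ s in Ioo τ t, (t - s) ^ (-d) = (t - τ) ^ (1 - d) / (1 - d) := by
  rw [← integral_Ioc_eq_integral_Ioo, ← intervalIntegral.integral_of_le hτt,
    intervalIntegral.integral_comp_sub_left (fun x => x ^ (-d)) t, sub_self,
    integral_rpow (Or.inl (by linarith)), Real.zero_rpow (by linarith)]
  ring_nf

lemma integral_Ioo_rpow_neg (he : e < 1) (ht : 0 ≤ t) :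
    ∫ s in Ioo 0 t, s ^ (-e) = t ^ (1 - e) / (1 - e) := by
  rw [← integral_Ioc_eq_integral_Ioo, ← intervalIntegral.integral_of_le ht,
    integral_rpow (Or.inl (by linarith)), Real.zero_rpow (by linarith)]
  ring_nf

lemma integrableOn_Ioo_rpow_neg (he : e < 1) (hτ : 0 ≤ τ) (ht : 0 < t) :
    IntegrableOn (fun s => s ^ (-e)) (Ioo τ t) :=
  ((intervalIntegral.integrableOn_Ioo_rpow_iff ht).2 (by linarith)).mono_set
    (Ioo_subset_Ioo_left hτ)

lemma integrableOn_kernel_majorant (hd : d < 1) (he : e < 1) (hτ : 0 ≤ τ) (hτt : τ ≤ t)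
    (ht : 0 < t) :
    IntegrableOn (fun s => 2 * t ^ (-e) * (t - s) ^ (-d) + 2 * ε ^ (1 - d) / t * s ^ (-e))
      (Ioo τ t) :=
  ((integrableOn_Ioo_sub_rpow_neg hd hτt).const_mul _).add
    ((integrableOn_Ioo_rpow_neg he hτ ht).const_mul _)

lemma integrableOn_sub_rpow_neg_mul_rpow_neg (hd : d ∈ Ico 0 1) (he : e ∈ Ico 0 1)
    (ht : 0 < t) : IntegrableOn (fun s => (t - s) ^ (-d) * s ^ (-e)) (Ioo 0 t) := by
  refine Integrable.mono' (integrableOn_kernel_majorant (ε := t) hd.2 he.2 le_rfl ht.le ht)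
    (by fun_prop) ((ae_restrict_iff' measurableSet_Ioo).2 (ae_of_all _ fun s hs => ?_))
  rw [Real.norm_of_nonneg (by have := hs.1; have : 0 < t - s := sub_pos.2 hs.2; positivity)]
  exact sub_rpow_neg_mul_rpow_neg_le ⟨hd.1, hd.2.le⟩ ⟨he.1, he.2.le⟩ hs.1 hs.2
    (by linarith [hs.1])

lemma integral_Ioo_sub_rpow_neg_mul_rpow_neg_le (hd : d ∈ Ico 0 1) (he : e ∈ Ico 0 1)
    (hτ : 0 ≤ τ) (hτt : τ < t) (hε : t - τ ≤ ε) :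
    ∫ s in Ioo τ t, (t - s) ^ (-d) * s ^ (-e)
      ≤ 2 * ((1 - d)⁻¹ + (1 - e)⁻¹) * ε ^ (1 - d) * t ^ (-e) := by
  have ht : 0 < t := hτ.trans_lt hτt
  have hd1 : 0 < 1 - d := by linarith [hd.2]
  have he1 : 0 < 1 - e := by linarith [he.2]
  have hε0 : 0 ≤ ε := by linarith
  have hIe : ∫ s in Ioo τ t, s ^ (-e) ≤ t ^ (1 - e) / (1 - e) := by
    rw [← integral_Ioo_rpow_neg he.2 ht.le]
    exact setIntegral_mono_set (integrableOn_Ioo_rpow_neg he.2 le_rfl ht)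
      ((ae_restrict_iff' measurableSet_Ioo).2 (ae_of_all _ fun s hs => Real.rpow_nonneg hs.1.le _))
      (Ioo_subset_Ioo_left hτ).eventuallyLE
  calc ∫ s in Ioo τ t, (t - s) ^ (-d) * s ^ (-e)
      ≤ ∫ s in Ioo τ t, (2 * t ^ (-e) * (t - s) ^ (-d) + 2 * ε ^ (1 - d) / t * s ^ (-e)) := by
        refine integral_mono_of_nonneg ?_ (integrableOn_kernel_majorant hd.2 he.2 hτ hτt.le ht) ?_
        all_goals refine (ae_restrict_iff' measurableSet_Ioo).2 (ae_of_all _ fun s hs => ?_)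
        · have := (hτ.trans_lt hs.1); have : 0 < t - s := sub_pos.2 hs.2
          simp only [Pi.zero_apply]; positivity
        · exact sub_rpow_neg_mul_rpow_neg_le ⟨hd.1, hd.2.le⟩ ⟨he.1, he.2.le⟩
            (hτ.trans_lt hs.1) hs.2 (by linarith [hs.1])
    _ = 2 * t ^ (-e) * ((t - τ) ^ (1 - d) / (1 - d))
          + 2 * ε ^ (1 - d) / t * ∫ s in Ioo τ t, s ^ (-e) := by
        rw [integral_add ((integrableOn_Ioo_sub_rpow_neg hd.2 hτt.le).const_mul _)
          ((integrableOn_Ioo_rpow_neg he.2 hτ ht).const_mul _), integral_const_mul,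
          integral_const_mul, integral_Ioo_sub_rpow_neg hd.2 hτt.le]
    _ ≤ 2 * t ^ (-e) * (ε ^ (1 - d) / (1 - d))
          + 2 * ε ^ (1 - d) / t * (t ^ (1 - e) / (1 - e)) := by
        gcongr
    _ = 2 * ((1 - d)⁻¹ + (1 - e)⁻¹) * ε ^ (1 - d) * t ^ (-e) := by
        rw [Real.rpow_sub ht, Real.rpow_one, Real.rpow_neg ht.le]
        field_simp

end Kernel

section RpowBounds

variable {E : Type*} [NormedAddCommGroup E] {f : ℝ → E} {T e : ℝ}

lemma isBigO_rpow_neg_of_norm_le {M : ℝ} (h : ∀ t ∈ Ioc 0 T, ‖f t‖ ≤ M * t ^ (-e)) :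
    f =O[𝓟 (Ioc 0 T)] fun t => t ^ (-e) :=
  isBigO_principal.2 ⟨M, fun t ht => by
    rw [Real.norm_of_nonneg (Real.rpow_nonneg ht.1.le _)]; exact h t ht⟩

lemma isBigO_rpow_neg_of_rpow_mul_norm_le
    (h : ∃ K, ∀ t, 0 < t → t ≤ T → t ^ e * ‖f t‖ ≤ K) :
    f =O[𝓟 (Ioc 0 T)] fun t => t ^ (-e) := by
  obtain ⟨K, hK⟩ := h
  refine isBigO_rpow_neg_of_norm_le (M := K) fun t ht => ?_
  rw [Real.rpow_neg ht.1.le, ← div_eq_mul_inv, le_div_iff₀ (Real.rpow_pos_of_pos ht.1 _),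
    mul_comm]
  exact hK t ht.1 ht.2

lemma exists_norm_le_rpow_neg_of_isBigO (h : f =O[𝓟 (Ioc 0 T)] fun t => t ^ (-e)) :
    ∃ K ≥ 0, ∀ t ∈ Ioc 0 T, ‖f t‖ ≤ K * t ^ (-e) := by
  obtain ⟨K, hK0, hK⟩ := h.exists_nonneg
  refine ⟨K, hK0, fun t ht => ?_⟩
  simpa [Real.norm_of_nonneg (Real.rpow_nonneg ht.1.le _)] using isBigOWith_principal.1 hK t ht

end RpowBounds

section Gronwall

variable {w : ℝ → ℝ} {B C K T d e s τ ε : ℝ}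

lemma integral_Ioo_sub_rpow_neg_mul_le_of_eq_zero (hd : d ∈ Ico 0 1) (he : e ∈ Ico 0 1)
    (hw0 : ∀ σ, 0 ≤ w σ) (hτ : 0 ≤ τ) (hτs : τ < s) (hε : s - τ ≤ ε)
    (hzero : ∀ σ ∈ Ioc 0 τ, w σ = 0) (hB : 0 ≤ B)
    (hwB : ∀ σ ∈ Ioo τ s, w σ ≤ B * σ ^ (-e)) :
    ∫ σ in Ioo 0 s, (s - σ) ^ (-d) * w σ
      ≤ B * (2 * ((1 - d)⁻¹ + (1 - e)⁻¹) * ε ^ (1 - d) * s ^ (-e)) := by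
  have hs : 0 < s := hτ.trans_lt hτs
  rw [setIntegral_eq_of_subset_of_forall_sdiff_eq_zero measurableSet_Ioo
    (Ioo_subset_Ioo_left hτ) fun σ hσ => by
      rw [hzero σ ⟨hσ.1.1, not_lt.1 fun h => hσ.2 ⟨h, hσ.1.2⟩⟩, mul_zero]]
  calc ∫ σ in Ioo τ s, (s - σ) ^ (-d) * w σ
      ≤ ∫ σ in Ioo τ s, B * ((s - σ) ^ (-d) * σ ^ (-e)) := by
        refine integral_mono_of_nonneg ?_
          (((integrableOn_sub_rpow_neg_mul_rpow_neg hd he hs).mono_set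
            (Ioo_subset_Ioo_left hτ)).const_mul B) ?_
        all_goals refine (ae_restrict_iff' measurableSet_Ioo).2 (ae_of_all _ fun σ hσ => ?_)
        all_goals have hsσ : 0 ≤ (s - σ) ^ (-d) := Real.rpow_nonneg (by linarith [hσ.2]) _
        · exact mul_nonneg hsσ (hw0 σ)
        · calc (s - σ) ^ (-d) * w σ ≤ (s - σ) ^ (-d) * (B * σ ^ (-e)) := by
                gcongr; exact hwB σ hσ
            _ = B * ((s - σ) ^ (-d) * σ ^ (-e)) := by ring
    _ = B * ∫ σ in Ioo τ s, (s - σ) ^ (-d) * σ ^ (-e) := integral_const_mul _ _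
    _ ≤ _ := by gcongr; exact integral_Ioo_sub_rpow_neg_mul_rpow_neg_le hd he hτ hτs hε

lemma eq_zero_of_le_add_of_le_integral_sub_rpow_neg_mul (hd : d ∈ Ico 0 1) (he : e ∈ Ico 0 1)
    (hw0 : ∀ s, 0 ≤ w s) (hK0 : 0 ≤ K) (hK : ∀ s ∈ Ioc 0 T, w s ≤ K * s ^ (-e))
    (hC : 0 ≤ C)
    (hle : ∀ t ∈ Ioc 0 T, w t ≤ C * ∫ s in Ioo 0 t, (t - s) ^ (-d) * w s)
    (hq : C * (2 * ((1 - d)⁻¹ + (1 - e)⁻¹) * ε ^ (1 - d)) ≤ 1 / 2) (hτ : 0 ≤ τ)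
    (hzero : ∀ s ∈ Ioc 0 T, s ≤ τ → w s = 0) :
    ∀ s ∈ Ioc 0 T, s ≤ τ + ε → w s = 0 := by
  set k := 2 * ((1 - d)⁻¹ + (1 - e)⁻¹)
  have decay (m : ℕ) :
      ∀ s ∈ Ioc 0 T, s ≤ τ + ε → w s ≤ (1 / 2) ^ m * K * s ^ (-e) := by
    induction m with
    | zero => intro s hs _; simpa using hK s hs
    | succ m ih =>
      intro s hs hsε
      rcases le_or_gt s τ with hsτ | hτs
      · rw [hzero s hs hsτ]; have := hs.1; positivity
      have hI := integral_Ioo_sub_rpow_neg_mul_le_of_eq_zero (d := d) (ε := ε) hd he hw0 hτ hτs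
        (by linarith) (fun σ hσ => hzero σ ⟨hσ.1, hσ.2.trans (hτs.le.trans hs.2)⟩ hσ.2)
        (by positivity : (0 : ℝ) ≤ (1 / 2) ^ m * K)
        (fun σ hσ => ih σ ⟨hτ.trans_lt hσ.1, hσ.2.le.trans hs.2⟩ (hσ.2.le.trans hsε))
      have hse : 0 ≤ s ^ (-e) := Real.rpow_nonneg hs.1.le _
      calc w s ≤ C * ∫ σ in Ioo 0 s, (s - σ) ^ (-d) * w σ := hle s hs
        _ ≤ C * ((1 / 2) ^ m * K * (k * ε ^ (1 - d) * s ^ (-e))) := by gcongr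
        _ = (C * (k * ε ^ (1 - d))) * ((1 / 2) ^ m * K * s ^ (-e)) := by ring
        _ ≤ 1 / 2 * ((1 / 2) ^ m * K * s ^ (-e)) := by gcongr
        _ = (1 / 2) ^ (m + 1) * K * s ^ (-e) := by ring
  intro s hs hsε
  refine le_antisymm (ge_of_tendsto' (x := atTop) ?_ fun m => decay m s hs hsε) (hw0 s)
  simpa using ((tendsto_pow_atTop_nhds_zero_of_lt_one (by norm_num : (0 : ℝ) ≤ 1 / 2)
    (by norm_num)).mul_const K).mul_const (s ^ (-e))

theorem eq_zero_of_le_integral_sub_rpow_neg_mul (hd : d ∈ Ico 0 1) (he : e ∈ Ico 0 1)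
    (hw0 : ∀ s, 0 ≤ w s) (hwb : w =O[𝓟 (Ioc 0 T)] fun s => s ^ (-e))
    (hle : ∀ t ∈ Ioc 0 T, w t ≤ C * ∫ s in Ioo 0 t, (t - s) ^ (-d) * w s) :
    ∀ t ∈ Ioc 0 T, w t = 0 := by
  obtain ⟨K, hK0, hK⟩ := exists_norm_le_rpow_neg_of_isBigO hwb
  have hle' (t) (ht : t ∈ Ioc 0 T) :
      w t ≤ max C 0 * ∫ s in Ioo 0 t, (t - s) ^ (-d) * w s :=
    (hle t ht).trans <| mul_le_mul_of_nonneg_right (le_max_left _ _) <|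
      setIntegral_nonneg measurableSet_Ioo fun s hs =>
        mul_nonneg (Real.rpow_nonneg (by linarith [hs.2]) _) (hw0 s)
  set k := 2 * ((1 - d)⁻¹ + (1 - e)⁻¹)
  obtain ⟨ε, hεq, hε⟩ : ∃ ε, max C 0 * (k * ε ^ (1 - d)) < 1 / 2 ∧ 0 < ε := by
    have hcont : ContinuousAt (fun ε : ℝ => max C 0 * (k * ε ^ (1 - d))) 0 :=
      continuousAt_const.mul (continuousAt_const.mul
        (Real.continuousAt_rpow_const _ _ (Or.inr (by linarith [hd.2]))))
    have h0 : max C 0 * (k * (0 : ℝ) ^ (1 - d)) = 0 := by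
      rw [Real.zero_rpow (by linarith [hd.2])]; ring
    rw [ContinuousAt, h0] at hcont
    exact ((hcont.eventually (gt_mem_nhds one_half_pos)).filter_mono nhdsWithin_le_nhds
      |>.and self_mem_nhdsWithin).exists (f := 𝓝[>] 0)
  have hcover (n : ℕ) : ∀ s ∈ Ioc 0 T, s ≤ n * ε → w s = 0 := by
    induction n with
    | zero => intro s hs h; simp at h; linarith [hs.1]
    | succ n ih =>
      push_cast; rw [add_one_mul]
      exact eq_zero_of_le_add_of_le_integral_sub_rpow_neg_mul hd he hw0 hK0
        (fun s hs => by simpa [Real.norm_of_nonneg (hw0 s)] using hK s hs) (le_max_right _ _)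
        hle' hεq.le (by positivity) ih
  intro t ht
  obtain ⟨n, hn⟩ := exists_nat_ge (T / ε)
  exact hcover n t ht (ht.2.trans ((div_le_iff₀ hε).1 hn))

end Gronwall

section SingularFamily

variable {E F G : Type*} [NormedAddCommGroup E] [NormedSpace ℝ E] [NormedAddCommGroup F]
  [NormedSpace ℝ F] [NormedAddCommGroup G] [NormedSpace ℝ G]

structure IsSingularFamily (S : ℝ → E →L[ℝ] F) (d T : ℝ) : Prop where
  continuousOn_apply : ∀ x, ContinuousOn (fun t => S t x) (Ioi 0)
  isBigO : S =O[𝓟 (Ioc 0 T)] fun t => t ^ (-d)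

namespace IsSingularFamily

variable {S S₁ S₂ : ℝ → E →L[ℝ] F} {d d' T : ℝ}

lemma of_norm_le {M : ℝ} (hc : ∀ x, ContinuousOn (fun t => S t x) (Ioi 0))
    (hM : ∀ t ∈ Ioc 0 T, ‖S t‖ ≤ M * t ^ (-d)) : IsSingularFamily S d T :=
  ⟨hc, isBigO_rpow_neg_of_norm_le hM⟩

lemma comp (hS : IsSingularFamily S d T) (P : G →L[ℝ] E) :
    IsSingularFamily (fun t => (S t).comp P) d T where
  continuousOn_apply x := hS.continuousOn_apply (P x)
  isBigO := (isBigO_of_le' (c := ‖P‖) _ fun t => by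
    rw [mul_comm]; exact (S t).opNorm_comp_le P).trans hS.isBigO

lemma add (hS₁ : IsSingularFamily S₁ d T) (hS₂ : IsSingularFamily S₂ d T) :
    IsSingularFamily (fun t => S₁ t + S₂ t) d T where
  continuousOn_apply x := (hS₁.continuousOn_apply x).add (hS₂.continuousOn_apply x)
  isBigO := hS₁.isBigO.add hS₂.isBigO

lemma mono (hS : IsSingularFamily S d T) (hdd' : d ≤ d') : IsSingularFamily S d' T where
  continuousOn_apply := hS.continuousOn_apply
  isBigO := hS.isBigO.trans <| isBigO_rpow_neg_of_norm_le (M := T ^ (d' - d)) fun t ht => by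
    rw [Real.norm_of_nonneg (Real.rpow_nonneg ht.1.le _),
      show -d = (d' - d) + -d' by ring, Real.rpow_add ht.1]
    have := ht.1
    gcongr
    exact ht.2

lemma isBigO_apply (hS : IsSingularFamily S d T) (x : E) :
    (fun t => S t x) =O[𝓟 (Ioc 0 T)] fun t => t ^ (-d) :=
  ((ContinuousLinearMap.apply ℝ F x).isBigO_comp S _).trans hS.isBigO

end IsSingularFamily

end SingularFamily

section Volterra

variable {E F : Type*} [NormedAddCommGroup E] [NormedSpace ℝ E] [NormedAddCommGroup F]
  [NormedSpace ℝ F]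

lemma aestronglyMeasurable_apply_of_continuousOn {α : Type*} [MeasurableSpace α]
    [TopologicalSpace α] [OpensMeasurableSpace α] [SecondCountableTopology α] {μ : Measure α}
    {A : Set α} (hA : MeasurableSet A) {S : ℝ → E →L[ℝ] F}
    (hS : ∀ x, ContinuousOn (fun τ => S τ x) (Ioi 0)) {g : α → ℝ} (hg : Continuous g)
    (hgA : MapsTo g A (Ioi 0)) {f : α → E} (hf : AEStronglyMeasurable f (μ.restrict A)) :
    AEStronglyMeasurable (fun a => S (g a) (f a)) (μ.restrict A) := by
  have hsimple (ψ : SimpleFunc α E) :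
      AEStronglyMeasurable (fun a => S (g a) (ψ a)) (μ.restrict A) := by
    induction ψ using SimpleFunc.induction with
    | @const c U hU =>
      convert (((hS c).comp hg.continuousOn hgA).aestronglyMeasurable hA).indicator hU using 1
      ext a
      by_cases ha : a ∈ U <;> simp [ha]
    | add _ hφ hψ =>
      convert hφ.add hψ using 1
      ext a
      simp
  obtain ⟨f', hf'm, hff'⟩ := hf
  refine (aestronglyMeasurable_of_tendsto_ae atTop (fun n => hsimple (hf'm.approx n))
    (ae_of_all _ fun a => ((S (g a)).continuous.tendsto _).comp (hf'm.tendsto_approx a))).congr ?_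
  filter_upwards [hff'] with a ha
  rw [ha]

variable {d e t T : ℝ}

lemma integrableOn_sub_rpow_neg_mul {g : ℝ → ℝ} (hd : d ∈ Ico 0 1) (he : e ∈ Ico 0 1)
    (hg : AEStronglyMeasurable g (volume.restrict (Ioi 0)))
    (hgb : g =O[𝓟 (Ioc 0 T)] fun s => s ^ (-e)) (ht : t ∈ Ioc 0 T) :
    IntegrableOn (fun s => (t - s) ^ (-d) * g s) (Ioo 0 t) := by
  obtain ⟨K, -, hK⟩ := exists_norm_le_rpow_neg_of_isBigO hgb
  refine Integrable.mono' ((integrableOn_sub_rpow_neg_mul_rpow_neg hd he ht.1).const_mul K)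
    ((by fun_prop : Measurable fun s : ℝ => (t - s) ^ (-d)).aestronglyMeasurable.mul
      (hg.mono_measure (Measure.restrict_mono Ioo_subset_Ioi_self le_rfl)))
    ((ae_restrict_iff' measurableSet_Ioo).2 (ae_of_all _ fun s hs => ?_))
  have hts : 0 ≤ (t - s) ^ (-d) := Real.rpow_nonneg (by linarith [hs.2]) _
  calc ‖(t - s) ^ (-d) * g s‖ = (t - s) ^ (-d) * ‖g s‖ := by
        rw [norm_mul, Real.norm_of_nonneg hts]
    _ ≤ (t - s) ^ (-d) * (K * s ^ (-e)) := by gcongr; exact hK s ⟨hs.1, hs.2.le.trans ht.2⟩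
    _ = K * ((t - s) ^ (-d) * s ^ (-e)) := by ring

namespace IsSingularFamily

variable {S : ℝ → E →L[ℝ] F} {f : ℝ → E}

lemma integrableOn (hS : IsSingularFamily S d T) (hd : d ∈ Ico 0 1) (he : e ∈ Ico 0 1)
    (hf : AEStronglyMeasurable f (volume.restrict (Ioi 0)))
    (hfb : f =O[𝓟 (Ioc 0 T)] fun s => s ^ (-e)) (ht : t ∈ Ioc 0 T) :
    IntegrableOn (fun s => S (t - s) (f s)) (Ioo 0 t) := by
  obtain ⟨M, -, hM⟩ := exists_norm_le_rpow_neg_of_isBigO hS.isBigO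
  refine Integrable.mono'
    ((integrableOn_sub_rpow_neg_mul hd he hf.norm hfb.norm_left ht).const_mul M)
    (aestronglyMeasurable_apply_of_continuousOn measurableSet_Ioo hS.continuousOn_apply
      (continuous_sub_left t) (fun s hs => sub_pos.2 hs.2)
      (hf.mono_measure (Measure.restrict_mono Ioo_subset_Ioi_self le_rfl)))
    ((ae_restrict_iff' measurableSet_Ioo).2 (ae_of_all _ fun s hs => ?_))
  calc ‖S (t - s) (f s)‖ ≤ ‖S (t - s)‖ * ‖f s‖ := (S (t - s)).le_opNorm _
    _ ≤ M * (t - s) ^ (-d) * ‖f s‖ := by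
        gcongr; exact hM _ ⟨sub_pos.2 hs.2, by linarith [hs.1, ht.2]⟩
    _ = M * ((t - s) ^ (-d) * ‖f s‖) := by ring

lemma eq_add_integral_add_apply {S₁ S₂ : ℝ → E →L[ℝ] E} {d₁ d₂ : ℝ} {g : ℝ → E}
    (hS₁ : IsSingularFamily S₁ d₁ T) (hS₂ : IsSingularFamily S₂ d₂ T) (hd₁ : d₁ ∈ Ico 0 1)
    (hd₂ : d₂ ∈ Ico 0 1) (he : e ∈ Ico 0 1) (hf : AEStronglyMeasurable f (volume.restrict (Ioi 0)))
    (hfb : f =O[𝓟 (Ioc 0 T)] fun s => s ^ (-e))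
    (hf_eq : ∀ t ∈ Ioc 0 T, f t = g t + (∫ s in Ioo 0 t, S₁ (t - s) (f s))
      + ∫ s in Ioo 0 t, S₂ (t - s) (f s)) :
    ∀ t ∈ Ioc 0 T, f t = g t + ∫ s in Ioo 0 t, (S₁ (t - s) + S₂ (t - s)) (f s) := by
  intro t ht
  rw [hf_eq t ht, add_assoc,
    ← integral_add (hS₁.integrableOn hd₁ he hf hfb ht) (hS₂.integrableOn hd₂ he hf hfb ht)]
  rfl

end IsSingularFamily

theorem volterra_solution_unique {S : ℝ → E →L[ℝ] E} {g u v : ℝ → E}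
    (hS : IsSingularFamily S d T) (hd : d ∈ Ico 0 1) (he : e ∈ Ico 0 1)
    (hu : AEStronglyMeasurable u (volume.restrict (Ioi 0)))
    (hub : u =O[𝓟 (Ioc 0 T)] fun s => s ^ (-e))
    (hv : AEStronglyMeasurable v (volume.restrict (Ioi 0)))
    (hvb : v =O[𝓟 (Ioc 0 T)] fun s => s ^ (-e))
    (hu_eq : ∀ t ∈ Ioc 0 T, u t = g t + ∫ s in Ioo 0 t, S (t - s) (u s))
    (hv_eq : ∀ t ∈ Ioc 0 T, v t = g t + ∫ s in Ioo 0 t, S (t - s) (v s)) :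
    ∀ t ∈ Ioc 0 T, u t = v t := by
  obtain ⟨M, -, hM⟩ := exists_norm_le_rpow_neg_of_isBigO hS.isBigO
  have hwb := (hub.sub hvb).norm_left
  have hw := eq_zero_of_le_integral_sub_rpow_neg_mul (C := M) hd he (fun _ => norm_nonneg _)
    hwb fun t ht => ?_
  · exact fun t ht => sub_eq_zero.1 (norm_eq_zero.1 (hw t ht))
  have hdiff : u t - v t = ∫ s in Ioo 0 t, S (t - s) (u s - v s) := by
    rw [hu_eq t ht, hv_eq t ht, add_sub_add_left_eq_sub,
      ← integral_sub (hS.integrableOn hd he hu hub ht) (hS.integrableOn hd he hv hvb ht)]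
    simp only [map_sub]
  rw [hdiff, ← integral_const_mul]
  refine norm_integral_le_of_norm_le
    ((integrableOn_sub_rpow_neg_mul hd he (hu.sub hv).norm hwb ht).const_mul M)
    ((ae_restrict_iff' measurableSet_Ioo).2 (ae_of_all _ fun s hs => ?_))
  calc ‖S (t - s) (u s - v s)‖ ≤ ‖S (t - s)‖ * ‖u s - v s‖ := (S (t - s)).le_opNorm _
    _ ≤ M * (t - s) ^ (-d) * ‖u s - v s‖ := by
        gcongr; exact hM _ ⟨sub_pos.2 hs.2, by linarith [hs.1, ht.2]⟩
    _ = M * ((t - s) ^ (-d) * ‖u s - v s‖) := by ring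

end Volterra

section Triangle

variable {E : Type*} [NormedAddCommGroup E] {t : ℝ}

def triangle (t : ℝ) : Set (ℝ × ℝ) := {p | 0 < p.2 ∧ p.2 < p.1 ∧ p.1 < t}

lemma measurableSet_triangle : MeasurableSet (triangle t) :=
  (measurableSet_lt measurable_const measurable_snd).inter <|
    (measurableSet_lt measurable_snd measurable_fst).inter
      (measurableSet_lt measurable_fst measurable_const)

lemma triangle_indicator_apply (F : ℝ × ℝ → E) (s r : ℝ) :
    (triangle t).indicator F (s, r)
      = (Ioo 0 t).indicator (fun s => (Ioo 0 s).indicator (fun r => F (s, r)) r) s := by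
  simp only [indicator_apply, triangle, mem_Ioo]
  split_ifs <;> first | rfl | (exfalso; grind)

lemma triangle_indicator_apply' (F : ℝ × ℝ → E) (s r : ℝ) :
    (triangle t).indicator F (s, r)
      = (Ioo 0 t).indicator (fun r => (Ioo r t).indicator (fun s => F (s, r)) s) r := by
  simp only [indicator_apply, triangle, mem_Ioo]
  split_ifs <;> first | rfl | (exfalso; grind)

lemma integral_Ioo_integral_Ioo_swap [NormedSpace ℝ E] {H : ℝ → ℝ → E}
    (hH : IntegrableOn (Function.uncurry H) (triangle t) (volume.prod volume)) :
    ∫ s in Ioo 0 t, ∫ r in Ioo 0 s, H s r = ∫ r in Ioo 0 t, ∫ s in Ioo r t, H s r := by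
  have hF := (integrable_indicator_iff measurableSet_triangle).2 hH
  rw [← integral_indicator measurableSet_Ioo, ← integral_indicator measurableSet_Ioo]
  convert integral_integral_swap
    (f := fun s r => (triangle t).indicator (Function.uncurry H) (s, r)) hF using 1
  · congr 1 with s
    simp_rw [triangle_indicator_apply]
    by_cases hs : s ∈ Ioo 0 t
    · simp [indicator_of_mem hs, integral_indicator measurableSet_Ioo]
    · simp [indicator_of_notMem hs]
  · congr 1 with r
    simp_rw [triangle_indicator_apply']
    by_cases hr : r ∈ Ioo 0 t
    · simp [indicator_of_mem hr, integral_indicator measurableSet_Ioo]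
    · simp [indicator_of_notMem hr]

lemma integrableOn_triangle_of_setIntegral_le {W : ℝ × ℝ → ℝ} {g : ℝ → ℝ}
    (hW : Measurable W) (hW0 : ∀ p ∈ triangle t, 0 ≤ W p)
    (hsec : ∀ s ∈ Ioo 0 t, IntegrableOn (fun r => W (s, r)) (Ioo 0 s))
    (hg : IntegrableOn g (Ioo 0 t)) (hle : ∀ s ∈ Ioo 0 t, ∫ r in Ioo 0 s, W (s, r) ≤ g s) :
    IntegrableOn W (triangle t) (volume.prod volume) := by
  rw [← integrable_indicator_iff measurableSet_triangle]
  have hmeas := (hW.indicator (measurableSet_triangle (t := t))).aestronglyMeasurable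
    (μ := volume.prod volume)
  refine (integrable_prod_iff hmeas).2 ⟨ae_of_all _ fun s => ?_, ?_⟩
  · simp_rw [triangle_indicator_apply]
    by_cases hs : s ∈ Ioo 0 t
    · simpa [indicator_of_mem hs, integrable_indicator_iff measurableSet_Ioo] using hsec s hs
    · simp [indicator_of_notMem hs]
  refine Integrable.mono' ((integrable_indicator_iff measurableSet_Ioo).2 hg)
    hmeas.norm.integral_prod_right' (ae_of_all _ fun s => ?_)
  simp_rw [triangle_indicator_apply]
  by_cases hs : s ∈ Ioo 0 t
  · have hW0s : ∀ r ∈ Ioo 0 s, 0 ≤ W (s, r) := fun r hr => hW0 (s, r) ⟨hr.1, hr.2, hs.2⟩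
    simp only [indicator_of_mem hs, norm_indicator_eq_indicator_norm]
    rw [integral_indicator measurableSet_Ioo, setIntegral_congr_fun measurableSet_Ioo
      fun r hr => Real.norm_of_nonneg (hW0s r hr),
      Real.norm_of_nonneg (setIntegral_nonneg measurableSet_Ioo hW0s)]
    exact hle s hs
  · simp [indicator_of_notMem hs]

lemma integrableOn_triangle_kernel {a b e : ℝ} (ha : a ∈ Ico 0 1) (hb : b ∈ Ico 0 1)
    (he : e ∈ Ico 0 1) (ht : 0 < t) :
    IntegrableOn (fun p : ℝ × ℝ => (t - p.1) ^ (-a) * ((p.1 - p.2) ^ (-b) * p.2 ^ (-e)))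
      (triangle t) (volume.prod volume) := by
  set k := 2 * ((1 - b)⁻¹ + (1 - e)⁻¹)
  have hk : 0 ≤ k := by
    have : 0 < 1 - b := by linarith [hb.2]
    have : 0 < 1 - e := by linarith [he.2]
    positivity
  refine integrableOn_triangle_of_setIntegral_le (by fun_prop) (fun p hp => ?_)
    (fun s hs => (integrableOn_sub_rpow_neg_mul_rpow_neg hb he hs.1).const_mul ((t - s) ^ (-a)))
    ((integrableOn_sub_rpow_neg_mul_rpow_neg ha he ht).const_mul (k * t ^ (1 - b)))
    fun s hs => ?_
  · have := hp.1; have : 0 < p.1 - p.2 := sub_pos.2 hp.2.1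
    have : 0 < t - p.1 := sub_pos.2 hp.2.2
    positivity
  have hts : 0 ≤ (t - s) ^ (-a) := Real.rpow_nonneg (by linarith [hs.2]) _
  have hse : 0 ≤ s ^ (-e) := Real.rpow_nonneg hs.1.le _
  have hmono : s ^ (1 - b) ≤ t ^ (1 - b) := Real.rpow_le_rpow hs.1.le hs.2.le (by linarith [hb.2])
  dsimp only
  rw [integral_const_mul]
  calc (t - s) ^ (-a) * ∫ r in Ioo 0 s, (s - r) ^ (-b) * r ^ (-e)
      ≤ (t - s) ^ (-a) * (k * s ^ (1 - b) * s ^ (-e)) := by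
        gcongr; exact integral_Ioo_sub_rpow_neg_mul_rpow_neg_le hb he le_rfl hs.1 (sub_zero s).le
    _ ≤ (t - s) ^ (-a) * (k * t ^ (1 - b) * s ^ (-e)) := by gcongr
    _ = k * t ^ (1 - b) * ((t - s) ^ (-a) * s ^ (-e)) := by ring

end Triangle

section Associativity

variable {E F G : Type*} [NormedAddCommGroup E] [NormedSpace ℝ E] [NormedAddCommGroup F]
  [NormedSpace ℝ F] [NormedAddCommGroup G] [NormedSpace ℝ G]
  {A : ℝ → F →L[ℝ] G} {B : ℝ → E →L[ℝ] F} {f : ℝ → E} {a b e t T : ℝ}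

lemma integral_Ioo_eq_integral_Ioo_add {φ : ℝ → G} {r : ℝ} (hrt : r ≤ t) :
    ∫ s in Ioo r t, φ s = ∫ σ in Ioo 0 (t - r), φ (σ + r) := by
  rw [← integral_Ioc_eq_integral_Ioo, ← integral_Ioc_eq_integral_Ioo,
    ← intervalIntegral.integral_of_le hrt, ← intervalIntegral.integral_of_le (sub_nonneg.2 hrt),
    intervalIntegral.integral_comp_add_right, zero_add, sub_add_cancel]

lemma integrableOn_triangle_apply_apply (hA : IsSingularFamily A a T)
    (hB : IsSingularFamily B b T) (ha : a ∈ Ico 0 1) (hb : b ∈ Ico 0 1) (he : e ∈ Ico 0 1)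
    (hf : AEStronglyMeasurable f (volume.restrict (Ioi 0)))
    (hfb : f =O[𝓟 (Ioc 0 T)] fun s => s ^ (-e)) (ht : t ∈ Ioc 0 T) :
    IntegrableOn (fun p : ℝ × ℝ => A (t - p.1) (B (p.1 - p.2) (f p.2))) (triangle t)
      (volume.prod volume) := by
  obtain ⟨MA, hMA0, hMA⟩ := exists_norm_le_rpow_neg_of_isBigO hA.isBigO
  obtain ⟨MB, hMB0, hMB⟩ := exists_norm_le_rpow_neg_of_isBigO hB.isBigO
  obtain ⟨K, hK0, hK⟩ := exists_norm_le_rpow_neg_of_isBigO hfb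
  have hrestrict : ((volume : Measure ℝ).prod volume).restrict (triangle t)
      ≤ (volume : Measure ℝ).prod (volume.restrict (Ioi 0)) :=
    calc _ ≤ ((volume : Measure ℝ).prod volume).restrict (univ ×ˢ Ioi (0 : ℝ)) :=
          Measure.restrict_mono
            (fun p (hp : p ∈ triangle t) => mk_mem_prod (mem_univ p.1) hp.1) le_rfl
      _ = _ := by rw [← Measure.prod_restrict, Measure.restrict_univ]
  have hmeas := aestronglyMeasurable_apply_of_continuousOn measurableSet_triangle
    hA.continuousOn_apply ((continuous_sub_left t).comp continuous_fst)
    (fun p hp => sub_pos.2 hp.2.2) <|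
    aestronglyMeasurable_apply_of_continuousOn measurableSet_triangle hB.continuousOn_apply
      (continuous_fst.sub continuous_snd) (fun p hp => sub_pos.2 hp.2.1)
      (hf.comp_snd.mono_measure hrestrict)
  refine Integrable.mono' ((integrableOn_triangle_kernel ha hb he ht.1).const_mul (MA * MB * K))
    hmeas ((ae_restrict_iff' measurableSet_triangle).2 (ae_of_all _ fun p hp => ?_))
  obtain ⟨hr, hrs, hst⟩ := hp
  have h₁ : 0 < t - p.1 := sub_pos.2 hst
  have h₂ : 0 < p.1 - p.2 := sub_pos.2 hrs
  calc ‖A (t - p.1) (B (p.1 - p.2) (f p.2))‖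
      ≤ ‖A (t - p.1)‖ * (‖B (p.1 - p.2)‖ * ‖f p.2‖) :=
        ((A _).le_opNorm _).trans (by gcongr; exact (B _).le_opNorm _)
    _ ≤ (MA * (t - p.1) ^ (-a)) * ((MB * (p.1 - p.2) ^ (-b)) * (K * p.2 ^ (-e))) := by
        gcongr
        · exact hMA _ ⟨h₁, by linarith [ht.2]⟩
        · exact hMB _ ⟨h₂, by linarith [ht.2]⟩
        · exact hK _ ⟨hr, by linarith [ht.2]⟩
    _ = MA * MB * K * ((t - p.1) ^ (-a) * ((p.1 - p.2) ^ (-b) * p.2 ^ (-e))) := by ring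

theorem integral_Ioo_apply_integral_Ioo_apply [CompleteSpace F] [CompleteSpace G]
    (hA : IsSingularFamily A a T) (hB : IsSingularFamily B b T) (ha : a ∈ Ico 0 1)
    (hb : b ∈ Ico 0 1) (he : e ∈ Ico 0 1)
    (hf : AEStronglyMeasurable f (volume.restrict (Ioi 0)))
    (hfb : f =O[𝓟 (Ioc 0 T)] fun s => s ^ (-e)) (ht : t ∈ Ioc 0 T) :
    ∫ s in Ioo 0 t, A (t - s) (∫ r in Ioo 0 s, B (s - r) (f r))
      = ∫ r in Ioo 0 t, ∫ σ in Ioo 0 (t - r), A (t - r - σ) (B σ (f r)) :=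
  calc _ = ∫ s in Ioo 0 t, ∫ r in Ioo 0 s, A (t - s) (B (s - r) (f r)) :=
        setIntegral_congr_fun measurableSet_Ioo fun s hs => ((A (t - s)).integral_comp_comm
          (hB.integrableOn hb he hf hfb ⟨hs.1, hs.2.le.trans ht.2⟩)).symm
    _ = ∫ r in Ioo 0 t, ∫ s in Ioo r t, A (t - s) (B (s - r) (f r)) :=
        integral_Ioo_integral_Ioo_swap
          (integrableOn_triangle_apply_apply hA hB ha hb he hf hfb ht)
    _ = _ := setIntegral_congr_fun measurableSet_Ioo fun r hr => by
        rw [integral_Ioo_eq_integral_Ioo_add hr.2.le]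
        simp only [add_sub_cancel_right, sub_add_eq_sub_sub_swap]

end Associativity

section Perturbation

variable {X Y : Type*} [NormedAddCommGroup X] [NormedSpace ℝ X] [NormedAddCommGroup Y]
  [NormedSpace ℝ Y] {A : ℝ → X →L[ℝ] X} {S SP : ℝ → Y →L[ℝ] X} {P : X →L[ℝ] Y}
  {g g₁ v : ℝ → X} {a b b' e T : ℝ}

theorem solves_joint_of_solves_sequential [CompleteSpace X] (hA : IsSingularFamily A a T)
    (hS : IsSingularFamily S b' T) (hSP : IsSingularFamily SP b T) (ha : a ∈ Ico 0 1)
    (hb : b ∈ Ico 0 1) (hb' : b' ∈ Ico 0 1) (he : e ∈ Ico 0 1)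
    (hg₁ : AEStronglyMeasurable g₁ (volume.restrict (Ioi 0)))
    (hg₁b : g₁ =O[𝓟 (Ioc 0 T)] fun s => s ^ (-e))
    (hv : AEStronglyMeasurable v (volume.restrict (Ioi 0)))
    (hvb : v =O[𝓟 (Ioc 0 T)] fun s => s ^ (-e))
    (hg₁_eq : ∀ t ∈ Ioc 0 T, g₁ t = g t + ∫ s in Ioo 0 t, A (t - s) (g₁ s))
    (hSP_eq : ∀ y, ∀ t ∈ Ioc 0 T, SP t y = S t y + ∫ s in Ioo 0 t, A (t - s) (SP s y))
    (hv_eq : ∀ t ∈ Ioc 0 T, v t = g₁ t + ∫ s in Ioo 0 t, SP (t - s) (P (v s))) :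
    ∀ t ∈ Ioc 0 T, v t = g t + (∫ s in Ioo 0 t, A (t - s) (v s))
      + ∫ s in Ioo 0 t, S (t - s) (P (v s)) := by
  intro t ht
  have hPv := P.continuous.comp_aestronglyMeasurable hv
  have hPvb := (P.isBigO_comp v _).trans hvb
  have key : (∫ s in Ioo 0 t, A (t - s) (v s)) - ∫ s in Ioo 0 t, A (t - s) (g₁ s)
      = (∫ r in Ioo 0 t, SP (t - r) (P (v r))) - ∫ r in Ioo 0 t, S (t - r) (P (v r)) :=
    calc _ = ∫ s in Ioo 0 t, A (t - s) (∫ r in Ioo 0 s, SP (s - r) (P (v r))) := by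
          rw [← integral_sub (hA.integrableOn ha he hv hvb ht)
            (hA.integrableOn ha he hg₁ hg₁b ht)]
          refine setIntegral_congr_fun measurableSet_Ioo fun s hs => ?_
          rw [← map_sub, hv_eq s ⟨hs.1, hs.2.le.trans ht.2⟩, add_sub_cancel_left]
      _ = ∫ r in Ioo 0 t, ∫ σ in Ioo 0 (t - r), A (t - r - σ) (SP σ (P (v r))) :=
          integral_Ioo_apply_integral_Ioo_apply hA hSP ha hb he hPv hPvb ht
      _ = ∫ r in Ioo 0 t, (SP (t - r) (P (v r)) - S (t - r) (P (v r))) :=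
          setIntegral_congr_fun measurableSet_Ioo fun r hr => by
            rw [hSP_eq _ (t - r) ⟨sub_pos.2 hr.2, by linarith [hr.1, ht.2]⟩,
              add_sub_cancel_left]
      _ = _ := integral_sub (hSP.integrableOn hb he hPv hPvb ht)
          (hS.integrableOn hb' he hPv hPvb ht)
  rw [hv_eq t ht, hg₁_eq t ht]
  linear_combination (norm := abel) -key

end Perturbation

theorem iterated_perturbations_eq_joint_general
    {Xγ Xα Xβ₁ Xβ₂ : Type*}
    [NormedAddCommGroup Xγ] [NormedSpace ℝ Xγ]
    [NormedAddCommGroup Xα] [NormedSpace ℝ Xα] [CompleteSpace Xα]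
    [NormedAddCommGroup Xβ₁] [NormedSpace ℝ Xβ₁]
    [NormedAddCommGroup Xβ₂] [NormedSpace ℝ Xβ₂]
    (Sγα : ℝ → Xγ →L[ℝ] Xα)
    (S₁ : ℝ → Xβ₁ →L[ℝ] Xα) (S₂ : ℝ → Xβ₂ →L[ℝ] Xα)
    (hS₁cont : ∀ y : Xβ₁, ContinuousOn (fun t => (S₁ t) y) (Ioi 0))
    (hS₂cont : ∀ y : Xβ₂, ContinuousOn (fun t => (S₂ t) y) (Ioi 0))
    (dγ d₁ d₂ : ℝ) (hdγ0 : 0 ≤ dγ) (hdγ1 : dγ < 1)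
    (hd₁0 : 0 ≤ d₁) (hd₁1 : d₁ < 1) (hd₂0 : 0 ≤ d₂) (hd₂1 : d₂ < 1)
    (P₁ : Xα →L[ℝ] Xβ₁) (P₂ : Xα →L[ℝ] Xβ₂)
    (SPγα : ℝ → Xγ →L[ℝ] Xα) (SP₂α : ℝ → Xβ₂ →L[ℝ] Xα)
    (hSPcont : ∀ x : Xγ, ContinuousOn (fun t => (SPγα t) x) (Ioi 0))
    (hSP₂cont : ∀ y : Xβ₂, ContinuousOn (fun t => (SP₂α t) y) (Ioi 0))
    (M : ℝ → ℝ)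
    (hbound : ∀ T > (0:ℝ), ∀ t : ℝ, 0 < t → t ≤ T →
      ‖Sγα t‖ ≤ M T * t ^ (-dγ) ∧ ‖S₁ t‖ ≤ M T * t ^ (-d₁) ∧
      ‖S₂ t‖ ≤ M T * t ^ (-d₂) ∧ ‖SPγα t‖ ≤ M T * t ^ (-dγ) ∧
      ‖SP₂α t‖ ≤ M T * t ^ (-d₂))
    -- Duhamel identities characterising the families perturbed by `P₁` alone
    (hDuh₁ : ∀ (x : Xγ) (t : ℝ), 0 < t →
      (SPγα t) x = (Sγα t) x + ∫ s in Ioo (0:ℝ) t, (S₁ (t - s)) (P₁ ((SPγα s) x)))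
    (hDuh₂ : ∀ (y : Xβ₂) (t : ℝ), 0 < t →
      (SP₂α t) y = (S₂ t) y + ∫ s in Ioo (0:ℝ) t, (S₁ (t - s)) (P₁ ((SP₂α s) y)))
    (u₀ : Xγ) (u v : ℝ → Xα)
    (humeas : AEStronglyMeasurable u (volume.restrict (Ioi (0:ℝ))))
    (hubd : ∀ T > (0:ℝ), ∃ K : ℝ, ∀ t : ℝ, 0 < t → t ≤ T → t ^ dγ * ‖u t‖ ≤ K)
    -- the jointly perturbed equation for `u`
    (hu : ∀ t > (0:ℝ), u t = (Sγα t) u₀ +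
        (∫ s in Ioo (0:ℝ) t, (S₁ (t - s)) (P₁ (u s))) +
        (∫ s in Ioo (0:ℝ) t, (S₂ (t - s)) (P₂ (u s))))
    (hvmeas : AEStronglyMeasurable v (volume.restrict (Ioi (0:ℝ))))
    (hvbd : ∀ T > (0:ℝ), ∃ K : ℝ, ∀ t : ℝ, 0 < t → t ≤ T → t ^ dγ * ‖v t‖ ≤ K)
    -- the sequentially perturbed equation for `v`
    (hv : ∀ t > (0:ℝ), v t = (SPγα t) u₀ +
        ∫ s in Ioo (0:ℝ) t, (SP₂α (t - s)) (P₂ (v s))) :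
    ∀ t > (0:ℝ), u t = v t := by
  intro t ht
  have hS₁ : IsSingularFamily (fun s => (S₁ s).comp P₁) d₁ t :=
    (IsSingularFamily.of_norm_le hS₁cont fun s hs => (hbound t ht s hs.1 hs.2).2.1).comp P₁
  have hS₂ : IsSingularFamily S₂ d₂ t :=
    .of_norm_le hS₂cont fun s hs => (hbound t ht s hs.1 hs.2).2.2.1
  have hSP : IsSingularFamily SPγα dγ t :=
    .of_norm_le hSPcont fun s hs => (hbound t ht s hs.1 hs.2).2.2.2.1
  have hSP₂ : IsSingularFamily SP₂α d₂ t :=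
    .of_norm_le hSP₂cont fun s hs => (hbound t ht s hs.1 hs.2).2.2.2.2
  have hub := isBigO_rpow_neg_of_rpow_mul_norm_le (hubd t ht)
  have hvb := isBigO_rpow_neg_of_rpow_mul_norm_le (hvbd t ht)
  have hdγ : dγ ∈ Ico 0 1 := ⟨hdγ0, hdγ1⟩
  have hd₁ : d₁ ∈ Ico 0 1 := ⟨hd₁0, hd₁1⟩
  have hd₂ : d₂ ∈ Ico 0 1 := ⟨hd₂0, hd₂1⟩
  have hv_joint := solves_joint_of_solves_sequential hS₁ hS₂ hSP₂ hd₁ hd₂ hd₂ hdγ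
    ((hSPcont u₀).aestronglyMeasurable measurableSet_Ioi) (hSP.isBigO_apply u₀) hvmeas hvb
    (fun s hs => hDuh₁ u₀ s hs.1) (fun y s hs => hDuh₂ y s hs.1) (fun s hs => hv s hs.1)
  exact volterra_solution_unique
    ((hS₁.mono (le_max_left _ _)).add ((hS₂.comp P₂).mono (le_max_right _ _)))
    ⟨le_max_of_le_left hd₁0, max_lt hd₁1 hd₂1⟩ hdγ humeas hub hvmeas hvb
    (hS₁.eq_add_integral_add_apply (hS₂.comp P₂) hd₁ hd₂ hdγ humeas hub fun s hs => hu s hs.1)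
    (hS₁.eq_add_integral_add_apply (hS₂.comp P₂) hd₁ hd₂ hdγ hvmeas hvb hv_joint) t ⟨ht, le_rfl⟩

/-- Iterated perturbations: performing the two perturbations `P₁, P₂`
sequentially (first perturbing by `P₁`, obtaining the families `S¹_{γα}` and
`S¹_{2α}` characterised by their Duhamel identities, and then perturbing by
`P₂`) yields the same solution as performing them jointly. -/
theorem iterated_perturbations_eq_joint
    {Xγ Xα Xβ₁ Xβ₂ : Type*}
    [NormedAddCommGroup Xγ] [NormedSpace ℝ Xγ] [CompleteSpace Xγ]
    [NormedAddCommGroup Xα] [NormedSpace ℝ Xα] [CompleteSpace Xα]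
    [NormedAddCommGroup Xβ₁] [NormedSpace ℝ Xβ₁] [CompleteSpace Xβ₁]
    [NormedAddCommGroup Xβ₂] [NormedSpace ℝ Xβ₂] [CompleteSpace Xβ₂]
    (Sγα : ℝ → Xγ →L[ℝ] Xα)
    (S₁ : ℝ → Xβ₁ →L[ℝ] Xα) (S₂ : ℝ → Xβ₂ →L[ℝ] Xα)
    (hScont : ∀ x : Xγ, ContinuousOn (fun t => (Sγα t) x) (Ioi 0))
    (hS₁cont : ∀ y : Xβ₁, ContinuousOn (fun t => (S₁ t) y) (Ioi 0))
    (hS₂cont : ∀ y : Xβ₂, ContinuousOn (fun t => (S₂ t) y) (Ioi 0))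
    (dγ d₁ d₂ : ℝ) (hdγ0 : 0 ≤ dγ) (hdγ1 : dγ < 1)
    (hd₁0 : 0 ≤ d₁) (hd₁1 : d₁ < 1) (hd₂0 : 0 ≤ d₂) (hd₂1 : d₂ < 1)
    (P₁ : Xα →L[ℝ] Xβ₁) (P₂ : Xα →L[ℝ] Xβ₂)
    (SPγα : ℝ → Xγ →L[ℝ] Xα) (SP₂α : ℝ → Xβ₂ →L[ℝ] Xα)
    (hSPcont : ∀ x : Xγ, ContinuousOn (fun t => (SPγα t) x) (Ioi 0))
    (hSP₂cont : ∀ y : Xβ₂, ContinuousOn (fun t => (SP₂α t) y) (Ioi 0))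
    (M : ℝ → ℝ)
    (hbound : ∀ T > (0:ℝ), ∀ t : ℝ, 0 < t → t ≤ T →
      ‖Sγα t‖ ≤ M T * t ^ (-dγ) ∧ ‖S₁ t‖ ≤ M T * t ^ (-d₁) ∧
      ‖S₂ t‖ ≤ M T * t ^ (-d₂) ∧ ‖SPγα t‖ ≤ M T * t ^ (-dγ) ∧
      ‖SP₂α t‖ ≤ M T * t ^ (-d₂))
    -- Duhamel identities characterising the families perturbed by `P₁` alone
    (hDuh₁ : ∀ (x : Xγ) (t : ℝ), 0 < t →
      (SPγα t) x = (Sγα t) x + ∫ s in Ioo (0:ℝ) t, (S₁ (t - s)) (P₁ ((SPγα s) x)))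
    (hDuh₂ : ∀ (y : Xβ₂) (t : ℝ), 0 < t →
      (SP₂α t) y = (S₂ t) y + ∫ s in Ioo (0:ℝ) t, (S₁ (t - s)) (P₁ ((SP₂α s) y)))
    (u₀ : Xγ) (u v : ℝ → Xα)
    (humeas : AEStronglyMeasurable u (volume.restrict (Ioi (0:ℝ))))
    (hubd : ∀ T > (0:ℝ), ∃ K : ℝ, ∀ t : ℝ, 0 < t → t ≤ T → t ^ dγ * ‖u t‖ ≤ K)
    -- the jointly perturbed equation for `u`
    (hu : ∀ t > (0:ℝ), u t = (Sγα t) u₀ +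
        (∫ s in Ioo (0:ℝ) t, (S₁ (t - s)) (P₁ (u s))) +
        (∫ s in Ioo (0:ℝ) t, (S₂ (t - s)) (P₂ (u s))))
    (hvmeas : AEStronglyMeasurable v (volume.restrict (Ioi (0:ℝ))))
    (hvbd : ∀ T > (0:ℝ), ∃ K : ℝ, ∀ t : ℝ, 0 < t → t ≤ T → t ^ dγ * ‖v t‖ ≤ K)
    -- the sequentially perturbed equation for `v`
    (hv : ∀ t > (0:ℝ), v t = (SPγα t) u₀ +
        ∫ s in Ioo (0:ℝ) t, (SP₂α (t - s)) (P₂ (v s))) :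
    ∀ t > (0:ℝ), u t = v t :=
  iterated_perturbations_eq_joint_general Sγα S₁ S₂ hS₁cont hS₂cont dγ d₁ d₂ hdγ0 hdγ1 hd₁0 hd₁1
    hd₂0 hd₂1 P₁ P₂ SPγα SP₂α hSPcont hSP₂cont M hbound hDuh₁ hDuh₂ u₀ u v humeas hubd hu hvmeas
    hvbd hv
end

section
/- (Resolvent identity relating the Laplace transforms of the perturbed and unperturbed evolutions.) Let u₀ ∈ X_α and let u : (0,∞) → X_α be continuous with ‖u(t)‖ ≤ K e^{a t} for all t > 0 and some K ≥ 0, satisfying u(t) = S_{αα}(t)u₀ + Σ_{i=1}^n ∫_0^t S_i(t−s) P_i u(s) ds for all t > 0. Then for every λ ∈ ℂ with Re λ < −a, all the Laplace-transform integrals below converge absolutely as Bochner integrals and ∫_0^∞ e^{λ t} u(t) dt = ∫_0^∞ e^{λ t} S_{αα}(t) u₀ dt + Σ_{i=1}^n G_i(λ) ( P_i ( ∫_0^∞ e^{λ s} u(s) ds ) ), where G_i(λ) y := ∫_0^∞ e^{λ τ} S_i(τ) y dτ for y ∈ X_{β_i}. -/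
/-!
For `Re λ < -a` every Laplace integrand is dominated by `e^{(Re λ + a) t} t^{-d}`, which is
integrable on `(0, ∞)` because `d < 1` (a Gamma integral). After multiplying the integral
equation by `e^{λ t}`, each convolution term is a double integral over `0 < s < t`; the shear
`τ = t - s` turns it into the integral of `e^{λ (s + τ)} S_i(τ) P_i u(s)` over the quadrant,
which Fubini factors as `G_i(λ) P_i` applied to the Laplace transform of `u`. Joint measurability
of that integrand comes from the joint continuity of `(τ, y) ↦ S_i(τ) y`, a consequence of strong
continuity and the local bound on `‖S_i(τ)‖`.
-/

open MeasureTheory Set Filter Topology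

lemma integrableOn_exp_mul_growth {lam : ℂ} {a d : ℝ} (hlam : lam.re < -a) (hd : d < 1)
    (M : ℝ) :
    IntegrableOn (fun t : ℝ => Real.exp (lam.re * t) * (M * Real.exp (a * t) * t ^ (-d)))
      (Ioi 0) := by
  have h := (integrableOn_rpow_mul_exp_neg_mul_rpow (p := 1) (b := -(lam.re + a))
    (s := -d) (by linarith) one_pos (by linarith)).const_mul M
  refine IntegrableOn.congr_fun h (fun t _ => ?_) measurableSet_Ioi
  rw [Real.rpow_one, neg_neg, add_mul, Real.exp_add]
  ring

lemma norm_cexp_mul_ofReal (lam : ℂ) (t : ℝ) :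
    ‖Complex.exp (lam * t)‖ = Real.exp (lam.re * t) := by
  rw [Complex.norm_exp, Complex.re_mul_ofReal]

lemma integrableOn_cexp_smul_of_norm_le {E : Type*} [NormedAddCommGroup E] [NormedSpace ℂ E]
    {f : ℝ → E} {B : ℝ → ℝ} {lam : ℂ} (hf : ContinuousOn f (Ioi 0))
    (hB : IntegrableOn (fun t => Real.exp (lam.re * t) * B t) (Ioi 0))
    (hfB : ∀ t > 0, ‖f t‖ ≤ B t) :
    IntegrableOn (fun t : ℝ => Complex.exp (lam * t) • f t) (Ioi 0) := by
  refine hB.mono' ?_ ?_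
  · exact ((by fun_prop : Continuous fun t : ℝ => Complex.exp (lam * t)).continuousOn.smul
      hf).aestronglyMeasurable measurableSet_Ioi
  · filter_upwards [ae_restrict_mem measurableSet_Ioi] with t ht
    rw [norm_smul, norm_cexp_mul_ofReal]
    gcongr
    exact hfB t ht

lemma continuousOn_uncurry_apply_of_norm_le {𝕜 X E F : Type*} [NontriviallyNormedField 𝕜]
    [TopologicalSpace X] [NormedAddCommGroup E] [NormedSpace 𝕜 E] [NormedAddCommGroup F]
    [NormedSpace 𝕜 F] {S : X → E →L[𝕜] F} {B : X → ℝ} {s : Set X}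
    (hS : ∀ y, ContinuousOn (fun x => S x y) s) (hB : ContinuousOn B s)
    (hSB : ∀ x ∈ s, ‖S x‖ ≤ B x) :
    ContinuousOn (fun p : X × E => S p.1 p.2) (s ×ˢ univ) := by
  rintro ⟨x₀, y₀⟩ ⟨hx₀, -⟩
  have hfst : Tendsto Prod.fst (𝓝[s ×ˢ univ] (x₀, y₀)) (𝓝[s] x₀) :=
    continuousWithinAt_fst.tendsto_nhdsWithin fun p hp => hp.1
  have hsmall : Tendsto (fun p : X × E => S p.1 (p.2 - y₀)) (𝓝[s ×ˢ univ] (x₀, y₀)) (𝓝 0) := by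
    have hbound : Tendsto (fun p : X × E => B p.1 * ‖p.2 - y₀‖) (𝓝[s ×ˢ univ] (x₀, y₀))
        (𝓝 (B x₀ * 0)) := by
      refine ((hB x₀ hx₀).tendsto.comp hfst).mul ?_
      have hnorm : Continuous fun p : X × E => ‖p.2 - y₀‖ := by fun_prop
      simpa using (hnorm.tendsto (x₀, y₀)).mono_left nhdsWithin_le_nhds
    rw [mul_zero] at hbound
    refine squeeze_zero_norm' ?_ hbound
    filter_upwards [self_mem_nhdsWithin] with p hp
    exact (S p.1).le_of_opNorm_le (hSB p.1 hp.1) _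
  have hcenter := (hS y₀ x₀ hx₀).tendsto.comp hfst
  simpa [ContinuousWithinAt, Function.comp_def] using hsmall.add hcenter

section Convolution

variable {E F : Type*} [NormedAddCommGroup E] [NormedSpace ℂ E] [NormedAddCommGroup F]
  [NormedSpace ℂ F] {S : ℝ → E →L[ℂ] F} {v : ℝ → E} {lam : ℂ} {a M d : ℝ}

lemma integrableOn_cexp_smul_apply (hS : ∀ y, ContinuousOn (fun t => S t y) (Ioi 0))
    (hSM : ∀ t > 0, ‖S t‖ ≤ M * Real.exp (a * t) * t ^ (-d)) (hlam : lam.re < -a) (hd : d < 1)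
    (y : E) : IntegrableOn (fun t : ℝ => Complex.exp (lam * t) • S t y) (Ioi 0) :=
  integrableOn_cexp_smul_of_norm_le (hS y) (integrableOn_exp_mul_growth hlam hd (M * ‖y‖))
    fun t ht => ((S t).le_of_opNorm_le (hSM t ht) y).trans_eq (by ring)

variable (S v lam) in
/-- In the coordinates `(s, τ) = (s, t - s)` this is `e^{λ t} S(t - s) v(s)`, the Laplace integrand
of the convolution `∫_0^t S(t - s) v(s) ds`. -/
noncomputable def convolutionLaplaceIntegrand : ℝ × ℝ → F :=
  (Ioi 0 ×ˢ Ioi 0).indicator fun p =>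
    Complex.exp (lam * p.2) • S p.2 (Complex.exp (lam * p.1) • v p.1)

lemma convolutionLaplaceIntegrand_apply (s τ : ℝ) :
    convolutionLaplaceIntegrand S v lam (s, τ) = (Ioi 0).indicator (fun τ : ℝ =>
      Complex.exp (lam * τ) •
        S τ ((Ioi 0).indicator (fun s : ℝ => Complex.exp (lam * s) • v s) s)) τ := by
  by_cases hs : 0 < s <;> by_cases hτ : 0 < τ <;>
    simp [convolutionLaplaceIntegrand, indicator, hs, hτ]

lemma convolutionLaplaceIntegrand_apply_sub (s t : ℝ) :
    convolutionLaplaceIntegrand S v lam (s, t - s) =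
      (Ioo 0 t).indicator (fun s => Complex.exp (lam * t) • S (t - s) (v s)) s := by
  by_cases h : 0 < s ∧ s < t
  · rw [convolutionLaplaceIntegrand, indicator_of_mem (by simpa using h),
      indicator_of_mem (by simpa using h), map_smul, smul_smul, ← Complex.exp_add]
    congr 3
    push_cast
    ring
  · rw [convolutionLaplaceIntegrand, indicator_of_notMem (by simpa using h),
      indicator_of_notMem (by simpa using h)]

lemma integrable_convolutionLaplaceIntegrand (hS : ∀ y, ContinuousOn (fun t => S t y) (Ioi 0))
    (hSM : ∀ t > 0, ‖S t‖ ≤ M * Real.exp (a * t) * t ^ (-d)) (hlam : lam.re < -a) (hd : d < 1)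
    (hv : ContinuousOn v (Ioi 0))
    (hv_int : IntegrableOn (fun s : ℝ => Complex.exp (lam * s) • v s) (Ioi 0)) :
    Integrable (convolutionLaplaceIntegrand S v lam) (volume.prod volume) := by
  have hquad : MeasurableSet (Ioi (0 : ℝ) ×ˢ Ioi (0 : ℝ)) :=
    measurableSet_Ioi.prod measurableSet_Ioi
  have hcont : ContinuousOn (fun p : ℝ × ℝ =>
      Complex.exp (lam * p.2) • S p.2 (Complex.exp (lam * p.1) • v p.1)) (Ioi 0 ×ˢ Ioi 0) := by
    have hB : ContinuousOn (fun t : ℝ => M * Real.exp (a * t) * t ^ (-d)) (Ioi 0) :=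
      (by fun_prop : Continuous fun t : ℝ => M * Real.exp (a * t)).continuousOn.mul
        (continuousOn_id.rpow_const fun t ht => Or.inl (ne_of_gt ht))
    have hSv := (continuousOn_uncurry_apply_of_norm_le hS hB hSM).comp
      ((continuous_snd.continuousOn).prodMk
        ((by fun_prop : Continuous fun p : ℝ × ℝ => Complex.exp (lam * p.1)).continuousOn.smul
          (hv.comp continuous_fst.continuousOn fun p hp => hp.1)))
      fun p (hp : p ∈ Ioi 0 ×ˢ Ioi 0) => ⟨hp.2, mem_univ _⟩
    exact (by fun_prop : Continuous fun p : ℝ × ℝ => Complex.exp (lam * p.2)).continuousOn.smul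
      hSv
  have hgrowth :=
    (integrable_indicator_iff measurableSet_Ioi).2 (integrableOn_exp_mul_growth hlam hd M)
  refine Integrable.mono'
    (((integrable_indicator_iff measurableSet_Ioi).2 hv_int).norm.mul_prod hgrowth)
    ((aestronglyMeasurable_indicator_iff hquad).2 (hcont.aestronglyMeasurable hquad)) ?_
  refine ae_of_all _ fun ⟨s, τ⟩ => ?_
  dsimp only
  rw [convolutionLaplaceIntegrand_apply]
  by_cases hτ : τ ∈ Ioi 0
  · rw [indicator_of_mem hτ, indicator_of_mem hτ, norm_smul, norm_cexp_mul_ofReal]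
    refine (mul_le_mul_of_nonneg_left ((S τ).le_of_opNorm_le (hSM τ hτ) _)
      (Real.exp_pos _).le).trans_eq ?_
    ring
  · simp [indicator_of_notMem hτ]

lemma integral_convolutionLaplaceIntegrand_sub (t : ℝ) :
    ∫ s, convolutionLaplaceIntegrand S v lam (s, t - s) =
      Complex.exp (lam * t) • ∫ s in Ioo (0 : ℝ) t, S (t - s) (v s) := by
  simp_rw [convolutionLaplaceIntegrand_apply_sub, integral_indicator measurableSet_Ioo,
    integral_smul]

lemma integral_convolutionLaplaceIntegrand [CompleteSpace E] [CompleteSpace F]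
    (hv_int : IntegrableOn (fun s : ℝ => Complex.exp (lam * s) • v s) (Ioi 0)) (τ : ℝ) :
    ∫ s, convolutionLaplaceIntegrand S v lam (s, τ) = (Ioi 0).indicator (fun τ : ℝ =>
      Complex.exp (lam * τ) • S τ (∫ s in Ioi (0 : ℝ), Complex.exp (lam * s) • v s)) τ := by
  by_cases hτ : τ ∈ Ioi 0
  · simp_rw [convolutionLaplaceIntegrand_apply, indicator_of_mem hτ, integral_smul,
      ← integral_indicator measurableSet_Ioi]
    exact congrArg _ ((S τ).integral_comp_comm
      ((integrable_indicator_iff measurableSet_Ioi).2 hv_int))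
  · simp [convolutionLaplaceIntegrand_apply, indicator_of_notMem hτ]

theorem integrableOn_and_integral_cexp_smul_convolution [CompleteSpace E] [CompleteSpace F]
    (hS : ∀ y, ContinuousOn (fun t => S t y) (Ioi 0))
    (hSM : ∀ t > 0, ‖S t‖ ≤ M * Real.exp (a * t) * t ^ (-d)) (hlam : lam.re < -a) (hd : d < 1)
    (hv : ContinuousOn v (Ioi 0))
    (hv_int : IntegrableOn (fun s : ℝ => Complex.exp (lam * s) • v s) (Ioi 0)) :
    IntegrableOn (fun t : ℝ => Complex.exp (lam * t) • ∫ s in Ioo (0 : ℝ) t, S (t - s) (v s))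
        (Ioi 0) ∧
      ∫ t in Ioi (0 : ℝ), Complex.exp (lam * t) • ∫ s in Ioo (0 : ℝ) t, S (t - s) (v s) =
        ∫ τ in Ioi (0 : ℝ), Complex.exp (lam * τ) •
          S τ (∫ s in Ioi (0 : ℝ), Complex.exp (lam * s) • v s) := by
  have hH := integrable_convolutionLaplaceIntegrand hS hSM hlam hd hv hv_int
  have hH_shear : Integrable
      (fun p : ℝ × ℝ => convolutionLaplaceIntegrand S v lam (p.1, p.2 - p.1))
      (volume.prod volume) :=
    (measurePreserving_prod_sub volume volume).integrable_comp_of_integrable hH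
  have hH_shear' : Integrable (fun t => ∫ s, convolutionLaplaceIntegrand S v lam (s, t - s)) :=
    hH_shear.integral_prod_right
  simp_rw [integral_convolutionLaplaceIntegrand_sub] at hH_shear'
  refine ⟨hH_shear'.integrableOn, ?_⟩
  calc ∫ t in Ioi (0 : ℝ), Complex.exp (lam * t) • ∫ s in Ioo (0 : ℝ) t, S (t - s) (v s)
      = ∫ t, ∫ s, convolutionLaplaceIntegrand S v lam (s, t - s) := by
        simp_rw [integral_convolutionLaplaceIntegrand_sub]
        refine setIntegral_eq_integral_of_forall_compl_eq_zero fun t ht => ?_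
        simp [Ioo_eq_empty_of_le (notMem_Ioi.1 ht)]
    _ = ∫ s, ∫ t, convolutionLaplaceIntegrand S v lam (s, t - s) :=
        (integral_integral_swap (f := fun s t => convolutionLaplaceIntegrand S v lam (s, t - s))
          hH_shear).symm
    _ = ∫ s, ∫ τ, convolutionLaplaceIntegrand S v lam (s, τ) := by
        congr 1 with s
        exact integral_sub_right_eq_self (fun τ => convolutionLaplaceIntegrand S v lam (s, τ)) s
    _ = ∫ τ, ∫ s, convolutionLaplaceIntegrand S v lam (s, τ) := integral_integral_swap hH
    _ = _ := by
        simp_rw [integral_convolutionLaplaceIntegrand hv_int, integral_indicator measurableSet_Ioi]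

end Convolution

theorem laplace_transform_resolvent_identity_general
    {n : ℕ}
    {Xα : Type*} [NormedAddCommGroup Xα] [NormedSpace ℂ Xα] [CompleteSpace Xα]
    {Xβ : Fin n → Type*} [∀ i, NormedAddCommGroup (Xβ i)]
    [∀ i, NormedSpace ℂ (Xβ i)] [∀ i, CompleteSpace (Xβ i)]
    (Sαα : ℝ → Xα →L[ℂ] Xα)
    (S : (i : Fin n) → ℝ → (Xβ i →L[ℂ] Xα))
    (hSααcont : ∀ x : Xα, ContinuousOn (fun t => (Sαα t) x) (Ioi 0))
    (hSicont : ∀ i (y : Xβ i), ContinuousOn (fun t => (S i t) y) (Ioi 0))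
    (a M : ℝ) (d : Fin n → ℝ) (hd1 : ∀ i, d i < 1)
    (hSααbd : ∀ t > (0:ℝ), ‖Sαα t‖ ≤ M * Real.exp (a * t))
    (hSibd : ∀ i, ∀ t > (0:ℝ), ‖S i t‖ ≤ M * Real.exp (a * t) * t ^ (-(d i)))
    (P : (i : Fin n) → Xα →L[ℂ] Xβ i)
    (u₀ : Xα) (u : ℝ → Xα)
    (hucont : ContinuousOn u (Ioi 0))
    (K : ℝ)
    (hubd : ∀ t > (0:ℝ), ‖u t‖ ≤ K * Real.exp (a * t))
    (hu : ∀ t > (0:ℝ), u t = (Sαα t) u₀ +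
        ∑ i, ∫ s in Ioo (0:ℝ) t, (S i (t - s)) ((P i) (u s))) :
    ∀ lam : ℂ, lam.re < -a →
      IntegrableOn (fun t : ℝ => Complex.exp (lam * t) • u t) (Ioi 0) ∧
      IntegrableOn (fun t : ℝ => Complex.exp (lam * t) • (Sαα t) u₀) (Ioi 0) ∧
      (∀ i (y : Xβ i),
        IntegrableOn (fun τ : ℝ => Complex.exp (lam * τ) • (S i τ) y) (Ioi 0)) ∧
      (∫ t in Ioi (0:ℝ), Complex.exp (lam * t) • u t) =
        (∫ t in Ioi (0:ℝ), Complex.exp (lam * t) • (Sαα t) u₀) +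
          ∑ i, ∫ τ in Ioi (0:ℝ), Complex.exp (lam * τ) •
            (S i τ) ((P i) (∫ s in Ioi (0:ℝ), Complex.exp (lam * s) • u s)) := by
  intro lam hlam
  have hu_int : IntegrableOn (fun t : ℝ => Complex.exp (lam * t) • u t) (Ioi 0) :=
    integrableOn_cexp_smul_of_norm_le hucont (integrableOn_exp_mul_growth hlam zero_lt_one K)
      fun t ht => by simpa using hubd t ht
  have hSαα_int := integrableOn_cexp_smul_apply (d := 0) hSααcont
    (fun t ht => by simpa using hSααbd t ht) hlam zero_lt_one u₀
  have hPu_int (i : Fin n) :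
      IntegrableOn (fun s : ℝ => Complex.exp (lam * s) • P i (u s)) (Ioi 0) := by
    have h := (P i).integrable_comp hu_int
    simp only [map_smul] at h
    exact h
  have hconv (i : Fin n) := integrableOn_and_integral_cexp_smul_convolution
    (v := fun s => P i (u s)) (hSicont i) (hSibd i) hlam (hd1 i)
    ((P i).continuous.comp_continuousOn hucont) (hPu_int i)
  refine ⟨hu_int, hSαα_int,
    fun i => integrableOn_cexp_smul_apply (hSicont i) (hSibd i) hlam (hd1 i), ?_⟩
  calc ∫ t in Ioi (0 : ℝ), Complex.exp (lam * t) • u t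
      = ∫ t in Ioi (0 : ℝ), (Complex.exp (lam * t) • Sαα t u₀ +
          ∑ i, Complex.exp (lam * t) • ∫ s in Ioo (0 : ℝ) t, S i (t - s) (P i (u s))) :=
        setIntegral_congr_fun measurableSet_Ioi fun t ht => by
          simp only [hu t ht, smul_add, Finset.smul_sum]
    _ = _ := by
        rw [integral_add hSαα_int (integrable_finsetSum _ fun i _ => (hconv i).1),
          integral_finsetSum _ fun i _ => (hconv i).1]
        simp_rw [(hconv _).2, ← (P _).integral_comp_comm hu_int, map_smul]

/-- Resolvent identity relating the Laplace transforms of the perturbed and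
unperturbed evolutions: if `u` is continuous with `‖u(t)‖ ≤ K e^{at}` and
satisfies `u(t) = S_{αα}(t)u₀ + Σ_i ∫_0^t S_i(t-s) P_i u(s) ds`, then for
`Re λ < -a` all Laplace-transform integrals converge absolutely and
`∫_0^∞ e^{λt}u(t)dt = ∫_0^∞ e^{λt}S_{αα}(t)u₀ dt + Σ_i G_i(λ)(P_i ∫_0^∞ e^{λs}u(s)ds)`,
where `G_i(λ)y = ∫_0^∞ e^{λτ} S_i(τ)y dτ`. -/
theorem laplace_transform_resolvent_identity
    {n : ℕ} (hn : 0 < n)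
    {Xα : Type*} [NormedAddCommGroup Xα] [NormedSpace ℂ Xα] [CompleteSpace Xα]
    {Xβ : Fin n → Type*} [∀ i, NormedAddCommGroup (Xβ i)]
    [∀ i, NormedSpace ℂ (Xβ i)] [∀ i, CompleteSpace (Xβ i)]
    (Sαα : ℝ → Xα →L[ℂ] Xα)
    (S : (i : Fin n) → ℝ → (Xβ i →L[ℂ] Xα))
    (hSααcont : ∀ x : Xα, ContinuousOn (fun t => (Sαα t) x) (Ioi 0))
    (hSicont : ∀ i (y : Xβ i), ContinuousOn (fun t => (S i t) y) (Ioi 0))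
    (a M : ℝ) (hM : 0 ≤ M) (d : Fin n → ℝ) (hd0 : ∀ i, 0 ≤ d i) (hd1 : ∀ i, d i < 1)
    (hSααbd : ∀ t > (0:ℝ), ‖Sαα t‖ ≤ M * Real.exp (a * t))
    (hSibd : ∀ i, ∀ t > (0:ℝ), ‖S i t‖ ≤ M * Real.exp (a * t) * t ^ (-(d i)))
    (P : (i : Fin n) → Xα →L[ℂ] Xβ i)
    (u₀ : Xα) (u : ℝ → Xα)
    (hucont : ContinuousOn u (Ioi 0))
    (K : ℝ) (hK : 0 ≤ K)
    (hubd : ∀ t > (0:ℝ), ‖u t‖ ≤ K * Real.exp (a * t))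
    (hu : ∀ t > (0:ℝ), u t = (Sαα t) u₀ +
        ∑ i, ∫ s in Ioo (0:ℝ) t, (S i (t - s)) ((P i) (u s))) :
    ∀ lam : ℂ, lam.re < -a →
      IntegrableOn (fun t : ℝ => Complex.exp (lam * t) • u t) (Ioi 0) ∧
      IntegrableOn (fun t : ℝ => Complex.exp (lam * t) • (Sαα t) u₀) (Ioi 0) ∧
      (∀ i (y : Xβ i),
        IntegrableOn (fun τ : ℝ => Complex.exp (lam * τ) • (S i τ) y) (Ioi 0)) ∧
      (∫ t in Ioi (0:ℝ), Complex.exp (lam * t) • u t) =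
        (∫ t in Ioi (0:ℝ), Complex.exp (lam * t) • (Sαα t) u₀) +
          ∑ i, ∫ τ in Ioi (0:ℝ), Complex.exp (lam * τ) •
            (S i τ) ((P i) (∫ s in Ioi (0:ℝ), Complex.exp (lam * s) • u s)) :=
  laplace_transform_resolvent_identity_general Sαα S hSααcont hSicont a M d hd1 hSααbd hSibd P u₀ u
    hucont K hubd hu
end

section
/- (Exterior tangent lemma, tangent to the left.) Let c ∈ (a,b) and d ∈ ℝ. Then there exists a unique x* ∈ [a,c] with f(x*) + f′(x*)(c − x*) = d if and only if f(a) + f′(a)(c − a) ≤ d ≤ f(c); equivalently (since a − c < 0), if and only if d ≤ f(c) and (f(a) − d)/(a − c) ≥ f′(a). -/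
/-! The value at `c` of the tangent line at `x`, `g x = f x + f' x * (c - x)`, has derivative
`f'' x * (c - x) > 0` on `(a, c)`, so `g` is strictly increasing and continuous on `[a, c]`.
Hence `g x = d` has a (necessarily unique) solution in `[a, c]` exactly when
`g a ≤ d ≤ g c`, and `g c = f c`. -/

open Set

theorem StrictMonoOn.existsUnique_eq_iff_mem_Icc {g : ℝ → ℝ} {a c : ℝ} (hac : a ≤ c)
    (hcont : ContinuousOn g (Icc a c)) (hmono : StrictMonoOn g (Icc a c)) (d : ℝ) :
    (∃! x, x ∈ Icc a c ∧ g x = d) ↔ g a ≤ d ∧ d ≤ g c := by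
  constructor
  · rintro ⟨x, ⟨hx, rfl⟩, -⟩
    exact ⟨hmono.monotoneOn (left_mem_Icc.2 hac) hx hx.1,
      hmono.monotoneOn hx (right_mem_Icc.2 hac) hx.2⟩
  · intro hd
    obtain ⟨x, hx, hgx⟩ := intermediate_value_Icc hac hcont hd
    exact ⟨x, ⟨hx, hgx⟩, fun y ⟨hy, hgy⟩ => hmono.injOn hy hx (hgy.trans hgx.symm)⟩

theorem hasDerivAt_tangent_eval {f f' : ℝ → ℝ} {x f''x : ℝ} (c : ℝ)
    (hf : HasDerivAt f (f' x) x) (hf' : HasDerivAt f' f''x x) :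
    HasDerivAt (fun y => f y + f' y * (c - y)) (f''x * (c - x)) x := by
  have h : HasDerivAt (fun y => f y + f' y * (c - y)) (f' x + (f''x * (c - x) + f' x * -1)) x :=
    hf.add (hf'.mul ((hasDerivAt_id x).const_sub c))
  convert h using 1
  ring

theorem continuousOn_tangent_eval {f f' f'' : ℝ → ℝ} {s : Set ℝ}
    (hf : ∀ x ∈ s, HasDerivWithinAt f (f' x) s x)
    (hf' : ∀ x ∈ s, HasDerivWithinAt f' (f'' x) s x) (c : ℝ) :
    ContinuousOn (fun x => f x + f' x * (c - x)) s := by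
  have hfc : ContinuousOn f s := fun x hx => (hf x hx).continuousWithinAt
  have hf'c : ContinuousOn f' s := fun x hx => (hf' x hx).continuousWithinAt
  fun_prop

section TangentOnIcc

variable {f f' f'' : ℝ → ℝ} {a c : ℝ}
  (hf : ∀ x ∈ Icc a c, HasDerivWithinAt f (f' x) (Icc a c) x)
  (hf' : ∀ x ∈ Icc a c, HasDerivWithinAt f' (f'' x) (Icc a c) x)
  (hpos : ∀ x ∈ Ioo a c, 0 < f'' x)
include hf hf' hpos

theorem strictMonoOn_tangent_eval : StrictMonoOn (fun x => f x + f' x * (c - x)) (Icc a c) := by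
  refine strictMonoOn_of_deriv_pos (convex_Icc a c) (continuousOn_tangent_eval hf hf' c)
    fun x hx => ?_
  rw [interior_Icc] at hx
  have hnhds : Icc a c ∈ nhds x := Icc_mem_nhds hx.1 hx.2
  have hx' : x ∈ Icc a c := Ioo_subset_Icc_self hx
  rw [(hasDerivAt_tangent_eval c ((hf x hx').hasDerivAt hnhds)
    ((hf' x hx').hasDerivAt hnhds)).deriv]
  exact mul_pos (hpos x hx) (sub_pos.2 hx.2)

theorem existsUnique_tangent_eval_eq_iff (hac : a ≤ c) (d : ℝ) :
    (∃! x, x ∈ Icc a c ∧ f x + f' x * (c - x) = d) ↔ f a + f' a * (c - a) ≤ d ∧ d ≤ f c := by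
  rw [(strictMonoOn_tangent_eval hf hf' hpos).existsUnique_eq_iff_mem_Icc hac
    (continuousOn_tangent_eval hf hf' c), sub_self, mul_zero, add_zero]

end TangentOnIcc

theorem exterior_tangent_left_general
    (a b : ℝ) (f f' f'' : ℝ → ℝ)
    (hf : ∀ x ∈ Set.Icc a b, HasDerivWithinAt f (f' x) (Set.Icc a b) x)
    (hf' : ∀ x ∈ Set.Icc a b, HasDerivWithinAt f' (f'' x) (Set.Icc a b) x)
    (hf''pos : ∀ x ∈ Set.Icc a b, 0 < f'' x)
    (c : ℝ) (hc : c ∈ Set.Ioo a b) (d : ℝ) :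
    ((∃! x : ℝ, x ∈ Set.Icc a c ∧ f x + f' x * (c - x) = d) ↔
      (f a + f' a * (c - a) ≤ d ∧ d ≤ f c)) ∧
    ((∃! x : ℝ, x ∈ Set.Icc a c ∧ f x + f' x * (c - x) = d) ↔
      (d ≤ f c ∧ f' a ≤ (f a - d) / (a - c))) := by
  obtain ⟨hac, hcb⟩ := hc
  have hsub : Icc a c ⊆ Icc a b := Icc_subset_Icc_right hcb.le
  have key := existsUnique_tangent_eval_eq_iff
    (fun x hx => (hf x (hsub hx)).mono hsub) (fun x hx => (hf' x (hsub hx)).mono hsub)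
    (fun x hx => hf''pos x (hsub (Ioo_subset_Icc_self hx))) hac.le d
  have hslope : f' a ≤ (f a - d) / (a - c) ↔ f a + f' a * (c - a) ≤ d := by
    rw [le_div_iff_of_neg (sub_neg.2 hac)]
    constructor <;> intro h <;> linarith
  rw [hslope]
  exact ⟨key, key.trans and_comm⟩

/-- Exterior tangent lemma (tangent to the left): for a `C²` function `f` on
`[a,b]` with `f'' > 0`, `c ∈ (a,b)` and `d ∈ ℝ`, there is a unique `x* ∈ [a,c]`
whose tangent line passes through `(c,d)` (i.e. `f(x*) + f'(x*)(c - x*) = d`)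
iff `f(a) + f'(a)(c-a) ≤ d ≤ f(c)`; equivalently, iff `d ≤ f(c)` and
`(f(a) - d)/(a - c) ≥ f'(a)`. -/
theorem exterior_tangent_left
    (a b : ℝ) (hab : a < b) (f f' f'' : ℝ → ℝ)
    (hf : ∀ x ∈ Set.Icc a b, HasDerivWithinAt f (f' x) (Set.Icc a b) x)
    (hf' : ∀ x ∈ Set.Icc a b, HasDerivWithinAt f' (f'' x) (Set.Icc a b) x)
    (hf''cont : ContinuousOn f'' (Set.Icc a b))
    (hf''pos : ∀ x ∈ Set.Icc a b, 0 < f'' x)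
    (c : ℝ) (hc : c ∈ Set.Ioo a b) (d : ℝ) :
    ((∃! x : ℝ, x ∈ Set.Icc a c ∧ f x + f' x * (c - x) = d) ↔
      (f a + f' a * (c - a) ≤ d ∧ d ≤ f c)) ∧
    ((∃! x : ℝ, x ∈ Set.Icc a c ∧ f x + f' x * (c - x) = d) ↔
      (d ≤ f c ∧ f' a ≤ (f a - d) / (a - c))) :=
  exterior_tangent_left_general a b f f' f'' hf hf' hf''pos c hc d
end

section
/- (Exterior tangent lemma, tangent to the right.) Let c ∈ (a,b) and d ∈ ℝ. Then there exists a unique x* ∈ [c,b] with f(x*) + f′(x*)(c − x*) = d if and only if f(b) + f′(b)(c − b) ≤ d ≤ f(c); equivalently, if and only if d ≤ f(c) and (f(b) − d)/(b − c) ≤ f′(b). -/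
/-! The intercept `g x = f x + f' x * (c - x)` of the tangent at `x` with the vertical line through
`c` has derivative `f'' x * (c - x)`, which is negative on `(c, b)`. So `g` decreases strictly and
continuously from `g c = f c` to `g b` on `[c, b]`, and by the intermediate value theorem it takes
the value `d` exactly once there iff `g b ≤ d ≤ f c`. -/

open Set

theorem HasDerivWithinAt.tangent_intercept {f f' : ℝ → ℝ} {f'' : ℝ} {t : Set ℝ} {c x : ℝ}
    (hf : HasDerivWithinAt f (f' x) t x) (hf' : HasDerivWithinAt f' f'' t x) :
    HasDerivWithinAt (fun y => f y + f' y * (c - y)) (f'' * (c - x)) t x := by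
  have hlin : HasDerivWithinAt (fun y => c - y) (-1) t x := by
    simpa using (hasDerivWithinAt_id x t).const_sub c
  refine (hf.add (hf'.mul hlin)).congr_deriv ?_
  ring

theorem strictAntiOn_tangent_intercept {f f' f'' : ℝ → ℝ} {c b : ℝ}
    (hf : ∀ x ∈ Icc c b, HasDerivWithinAt f (f' x) (Icc c b) x)
    (hf' : ∀ x ∈ Icc c b, HasDerivWithinAt f' (f'' x) (Icc c b) x)
    (hf''pos : ∀ x ∈ Ioo c b, 0 < f'' x) :
    StrictAntiOn (fun x => f x + f' x * (c - x)) (Icc c b) := by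
  have hg : ∀ x ∈ Icc c b, HasDerivWithinAt (fun y => f y + f' y * (c - y))
      (f'' x * (c - x)) (Icc c b) x := fun x hx => (hf x hx).tangent_intercept (hf' x hx)
  refine strictAntiOn_of_hasDerivWithinAt_neg (f' := fun x => f'' x * (c - x)) (convex_Icc c b)
    (HasDerivWithinAt.continuousOn hg) (fun x hx => ?_) (fun x hx => ?_)
  · rw [interior_Icc] at hx ⊢
    exact (hg x (Ioo_subset_Icc_self hx)).mono Ioo_subset_Icc_self
  · rw [interior_Icc] at hx
    exact mul_neg_of_pos_of_neg (hf''pos x hx) (by linarith [hx.1])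

theorem existsUnique_mem_Icc_eq_iff_of_strictAntiOn {g : ℝ → ℝ} {c b d : ℝ} (hcb : c ≤ b)
    (hcont : ContinuousOn g (Icc c b)) (hanti : StrictAntiOn g (Icc c b)) :
    (∃! x, x ∈ Icc c b ∧ g x = d) ↔ g b ≤ d ∧ d ≤ g c := by
  have hc : c ∈ Icc c b := left_mem_Icc.2 hcb
  have hb : b ∈ Icc c b := right_mem_Icc.2 hcb
  constructor
  · rintro ⟨x, ⟨hx, rfl⟩, -⟩
    exact ⟨hanti.antitoneOn hx hb hx.2, hanti.antitoneOn hc hx hx.1⟩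
  · intro hd
    obtain ⟨x, hx, hgx⟩ := intermediate_value_Icc' hcb hcont hd
    exact ⟨x, ⟨hx, hgx⟩, fun y ⟨hy, hgy⟩ => hanti.injOn hy hx (hgy.trans hgx.symm)⟩

theorem exterior_tangent_right_general
    (a b : ℝ) (f f' f'' : ℝ → ℝ)
    (hf : ∀ x ∈ Set.Icc a b, HasDerivWithinAt f (f' x) (Set.Icc a b) x)
    (hf' : ∀ x ∈ Set.Icc a b, HasDerivWithinAt f' (f'' x) (Set.Icc a b) x)
    (hf''pos : ∀ x ∈ Set.Icc a b, 0 < f'' x)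
    (c : ℝ) (hc : c ∈ Set.Ioo a b) (d : ℝ) :
    ((∃! x : ℝ, x ∈ Set.Icc c b ∧ f x + f' x * (c - x) = d) ↔
      (f b + f' b * (c - b) ≤ d ∧ d ≤ f c)) ∧
    ((∃! x : ℝ, x ∈ Set.Icc c b ∧ f x + f' x * (c - x) = d) ↔
      (d ≤ f c ∧ (f b - d) / (b - c) ≤ f' b)) := by
  obtain ⟨hac, hcb⟩ := hc
  have hsub : Icc c b ⊆ Icc a b := Icc_subset_Icc_left hac.le
  have hfcb : ∀ x ∈ Icc c b, HasDerivWithinAt f (f' x) (Icc c b) x :=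
    fun x hx => (hf x (hsub hx)).mono hsub
  have hf'cb : ∀ x ∈ Icc c b, HasDerivWithinAt f' (f'' x) (Icc c b) x :=
    fun x hx => (hf' x (hsub hx)).mono hsub
  have hanti := strictAntiOn_tangent_intercept hfcb hf'cb
    fun x hx => hf''pos x (hsub (Ioo_subset_Icc_self hx))
  have hcont : ContinuousOn (fun x => f x + f' x * (c - x)) (Icc c b) :=
    HasDerivWithinAt.continuousOn fun x hx => (hfcb x hx).tangent_intercept (hf'cb x hx)
  have key := existsUnique_mem_Icc_eq_iff_of_strictAntiOn (d := d) hcb.le hcont hanti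
  simp only [sub_self, mul_zero, add_zero] at key
  refine ⟨key, key.trans ?_⟩
  rw [div_le_iff₀ (sub_pos.2 hcb)]
  constructor <;> rintro ⟨h₁, h₂⟩ <;> constructor <;> linarith

/-- Exterior tangent lemma (tangent to the right): for a `C²` function `f` on
`[a,b]` with `f'' > 0`, `c ∈ (a,b)` and `d ∈ ℝ`, there is a unique `x* ∈ [c,b]`
whose tangent line passes through `(c,d)` (i.e. `f(x*) + f'(x*)(c - x*) = d`)
iff `f(b) + f'(b)(c-b) ≤ d ≤ f(c)`; equivalently, iff `d ≤ f(c)` and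
`(f(b) - d)/(b - c) ≤ f'(b)`. -/
theorem exterior_tangent_right
    (a b : ℝ) (hab : a < b) (f f' f'' : ℝ → ℝ)
    (hf : ∀ x ∈ Set.Icc a b, HasDerivWithinAt f (f' x) (Set.Icc a b) x)
    (hf' : ∀ x ∈ Set.Icc a b, HasDerivWithinAt f' (f'' x) (Set.Icc a b) x)
    (hf''cont : ContinuousOn f'' (Set.Icc a b))
    (hf''pos : ∀ x ∈ Set.Icc a b, 0 < f'' x)
    (c : ℝ) (hc : c ∈ Set.Ioo a b) (d : ℝ) :
    ((∃! x : ℝ, x ∈ Set.Icc c b ∧ f x + f' x * (c - x) = d) ↔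
      (f b + f' b * (c - b) ≤ d ∧ d ≤ f c)) ∧
    ((∃! x : ℝ, x ∈ Set.Icc c b ∧ f x + f' x * (c - x) = d) ↔
      (d ≤ f c ∧ (f b - d) / (b - c) ≤ f' b)) :=
  exterior_tangent_right_general a b f f' f'' hf hf' hf''pos c hc d
end
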